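/- arXiv:1204.0167 — 7 statements merged into one kernel-verified Lean document; each statement's English description precedes it below -/
import Mathlib

section
/- Let H₀, V be self-adjoint matrices on a finite-dimensional Hilbert space and define η(λ) = ∫₀¹ Tr(V(E₀(λ) − E_s(λ))) ds, where E_s(λ) is the spectral projection of H₀ + sV onto eigenvalues ≤ λ. Then η is a non-negative integrable function with ∫_ℝ η(λ) dλ = ½‖V‖₂². -/
/-!
For Hermitian `A`, the spectral projection `E_A(t)` minimises `P ↦ Tr((A - t) P)` over
`0 ≤ P ≤ 1`; applied to `A` and `B` this gives `Tr((B - A)(E_A(t) - E_B(t))) ≥ 0`. Hence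
`s ↦ Tr(V E_s(t))` is antitone, so the integrand of `η` is non-negative, and being antitone in `s`
and right-continuous in `t` it is jointly measurable. In the eigenbasis of `A`, `Tr(X E_A(t))` is
a step function, and integrating in `t` gives `∫ Tr(X (E_A(t) - E_B(t))) dt = Tr(X (B - A))`; for
`A = H₀`, `B = H₀ + sV`, `X = V` this is `s ‖V‖₂²`. Tonelli for the non-negative integrand then
yields integrability of `η` and `∫ η = ∫₀¹ s ‖V‖₂² ds = ‖V‖₂² / 2`.
-/

open scoped Matrix

/-- The spectral projection `χ_{(−∞,t]}(A)` of a Hermitian matrix `A`, defined via the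
spectral theorem. -/
noncomputable def specProj {n : ℕ} {A : Matrix (Fin n) (Fin n) ℂ} (hA : A.IsHermitian)
    (t : ℝ) : Matrix (Fin n) (Fin n) ℂ :=
  (Matrix.IsHermitian.eigenvectorUnitary hA : Matrix (Fin n) (Fin n) ℂ) *
    Matrix.diagonal (fun i => if hA.eigenvalues i ≤ t then (1 : ℂ) else 0) *
    star (Matrix.IsHermitian.eigenvectorUnitary hA : Matrix (Fin n) (Fin n) ℂ)

open Matrix MeasureTheory Filter Topology Set

lemma continuousWithinAt_Ici_ite_le (a t : ℝ) :
    ContinuousWithinAt (fun x : ℝ => if a ≤ x then (1 : ℝ) else 0) (Ici t) t := by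
  by_cases h : a ≤ t
  · refine continuousWithinAt_const.congr_of_eventuallyEq (f := fun _ => (1 : ℝ)) ?_ (if_pos h)
    exact eventually_nhdsWithin_of_forall fun x hx => if_pos (h.trans hx)
  · refine continuousWithinAt_const.congr_of_eventuallyEq (f := fun _ => (0 : ℝ)) ?_ (if_neg h)
    filter_upwards [Ico_mem_nhdsGE (not_le.mp h)] with x hx using if_neg (not_le.mpr hx.2)

theorem measurable_uncurry_of_continuousWithinAt_Ici {α β : Type*} [MeasurableSpace α]
    [TopologicalSpace β] [TopologicalSpace.PseudoMetrizableSpace β] [MeasurableSpace β]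
    [BorelSpace β]
    {f : α → ℝ → β} (hf : ∀ t, Measurable fun a => f a t)
    (hcont : ∀ a t, ContinuousWithinAt (f a) (Ici t) t) : Measurable (Function.uncurry f) := by
  -- round `t` up to the grid `ℤ / (k + 1)`, which only takes countably many values
  set r : ℕ → ℝ → ℝ := fun k t => ⌈t * (k + 1)⌉ / (k + 1)
  have hr_ge : ∀ k t, t ≤ r k t := fun k t => by
    rw [le_div_iff₀ (by positivity)]
    exact Int.le_ceil _
  have hr_lt : ∀ k t, r k t < t + 1 / (k + 1) := fun k t => by
    rw [div_lt_iff₀ (by positivity), add_mul, one_div_mul_cancel (by positivity)]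
    exact Int.ceil_lt_add_one _
  have hr : ∀ t, Tendsto (fun k => r k t) atTop (𝓝[≥] t) := fun t => by
    refine tendsto_nhdsWithin_iff.mpr ⟨?_, Eventually.of_forall fun k => hr_ge k t⟩
    have hupper : Tendsto (fun k : ℕ => t + 1 / ((k : ℝ) + 1)) atTop (𝓝 t) := by
      simpa using tendsto_one_div_add_atTop_nhds_zero_nat.const_add t
    exact tendsto_of_tendsto_of_tendsto_of_le_of_le tendsto_const_nhds hupper
      (fun k => hr_ge k t) fun k => (hr_lt k t).le
  have hmeas : ∀ k, Measurable fun p : α × ℝ => f p.1 (r k p.2) := fun k => by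
    have hgrid : Measurable fun q : α × ℤ => f q.1 (q.2 / (k + 1)) :=
      measurable_from_prod_countable_left fun m => hf (m / (k + 1))
    exact hgrid.comp (measurable_fst.prodMk (Int.measurable_ceil.comp (measurable_snd.mul_const _)))
  exact measurable_of_tendsto_metrizable hmeas
    (tendsto_pi_nhds.mpr fun p => (hcont p.1 p.2).tendsto.comp (hr p.2))

lemma ite_le_sub_ite_le_eq_indicator (a b x : ℝ) :
    ((if a ≤ x then (1 : ℝ) else 0) - if b ≤ x then 1 else 0) =
      (Ico a b).indicator 1 x - (Ico b a).indicator 1 x := by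
  simp only [indicator_apply, mem_Ico, Pi.one_apply]
  split_ifs <;> simp_all <;> linarith

lemma integrable_indicator_one_Ico (a b : ℝ) : Integrable ((Ico a b).indicator (1 : ℝ → ℝ)) :=
  (integrable_indicator_iff measurableSet_Ico).mpr (integrableOn_const measure_Ico_lt_top.ne)

lemma integrable_ite_le_sub_ite_le (a b : ℝ) :
    Integrable fun x : ℝ => (if a ≤ x then (1 : ℝ) else 0) - if b ≤ x then 1 else 0 := by
  simp_rw [ite_le_sub_ite_le_eq_indicator]
  exact (integrable_indicator_one_Ico a b).sub (integrable_indicator_one_Ico b a)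

lemma integral_ite_le_sub_ite_le (a b : ℝ) :
    ∫ x : ℝ, ((if a ≤ x then (1 : ℝ) else 0) - if b ≤ x then 1 else 0) = b - a := by
  simp_rw [ite_le_sub_ite_le_eq_indicator]
  rw [integral_sub (integrable_indicator_one_Ico a b) (integrable_indicator_one_Ico b a),
    integral_indicator_one measurableSet_Ico, integral_indicator_one measurableSet_Ico,
    Real.volume_real_Ico, Real.volume_real_Ico, ← neg_sub b a, max_zero_sub_max_neg_zero_eq_self]

lemma integrable_prod_of_nonneg {α β : Type*} [MeasurableSpace α] [MeasurableSpace β]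
    {μ : Measure α} {ν : Measure β} [SFinite ν] {f : α × β → ℝ}
    (hf : AEStronglyMeasurable f (μ.prod ν)) (hf_nonneg : ∀ᵐ x ∂μ, ∀ y, 0 ≤ f (x, y))
    (hf_slice : ∀ᵐ x ∂μ, Integrable (fun y => f (x, y)) ν)
    (hf_int : Integrable (fun x => ∫ y, f (x, y) ∂ν) μ) : Integrable f (μ.prod ν) := by
  refine (integrable_prod_iff hf).mpr ⟨hf_slice, hf_int.congr ?_⟩
  filter_upwards [hf_nonneg] with x hx
  simp only [Real.norm_of_nonneg (hx _)]

namespace Matrix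

variable {ι : Type*} [Fintype ι] [DecidableEq ι]

lemma re_trace_mul_conj_diagonal (U : unitaryGroup ι ℂ) (X : Matrix ι ι ℂ) (d : ι → ℝ) :
    (X * ((U : Matrix ι ι ℂ) * diagonal (fun i => (d i : ℂ)) * star (U : Matrix ι ι ℂ))).trace.re
      = ∑ j, d j * ((star (U : Matrix ι ι ℂ) * X * U) j j).re := by
  rw [← Matrix.mul_assoc, ← Matrix.mul_assoc, trace_mul_comm, ← Matrix.mul_assoc,
    ← Matrix.mul_assoc]
  simp [trace, mul_diagonal, Complex.re_sum, mul_comm]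

lemma sum_re_diag_conj_unitary (U : unitaryGroup ι ℂ) (X : Matrix ι ι ℂ) :
    ∑ j, ((star (U : Matrix ι ι ℂ) * X * U) j j).re = X.trace.re := by
  rw [← Complex.re_sum]
  change (star (U : Matrix ι ι ℂ) * X * U).trace.re = _
  rw [trace_mul_cycle, mem_unitaryGroup_iff.mp U.2, Matrix.one_mul]

lemma re_conj_diagonal_apply_mem_Icc (U : unitaryGroup ι ℂ) {d : ι → ℝ}
    (hd : ∀ i, d i ∈ Icc (0 : ℝ) 1) (j : ι) :
    (((U : Matrix ι ι ℂ) * diagonal (fun i => (d i : ℂ)) * star (U : Matrix ι ι ℂ)) j j).re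
      ∈ Icc (0 : ℝ) 1 := by
  have hentry : (((U : Matrix ι ι ℂ) * diagonal (fun i => (d i : ℂ)) * star (U : Matrix ι ι ℂ))
      j j).re = ∑ k, d k * Complex.normSq (U j k) := by
    rw [mul_apply, Complex.re_sum]
    refine Finset.sum_congr rfl fun k _ => ?_
    rw [mul_diagonal, star_apply, RCLike.star_def, mul_right_comm, Complex.mul_conj,
      ← Complex.ofReal_mul, Complex.ofReal_re, mul_comm]
  have hrow : ∑ k, Complex.normSq (U j k) = 1 := by
    have := congrArg Complex.re (congrFun (congrFun (mem_unitaryGroup_iff.mp U.2) j) j)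
    simpa [mul_apply, Complex.re_sum, Complex.normSq_apply, Complex.mul_re] using this
  rw [hentry]
  constructor
  · exact Finset.sum_nonneg fun k _ => mul_nonneg (hd k).1 (Complex.normSq_nonneg _)
  · calc ∑ k, d k * Complex.normSq (U j k) ≤ ∑ k, Complex.normSq (U j k) :=
          Finset.sum_le_sum fun k _ => mul_le_of_le_one_left (Complex.normSq_nonneg _) (hd k).2
      _ = 1 := hrow

end Matrix

section SpecProj

variable {n : ℕ} {A B : Matrix (Fin n) (Fin n) ℂ}

lemma specProj_eq_conj_diagonal (hA : A.IsHermitian) (t : ℝ) :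
    specProj hA t = (hA.eigenvectorUnitary : Matrix (Fin n) (Fin n) ℂ) *
      diagonal (fun i => ((if hA.eigenvalues i ≤ t then 1 else 0 : ℝ) : ℂ)) *
      star (hA.eigenvectorUnitary : Matrix (Fin n) (Fin n) ℂ) := by
  unfold specProj
  congr 3
  funext i
  split_ifs <;> simp

lemma re_trace_mul_specProj (X : Matrix (Fin n) (Fin n) ℂ) (hA : A.IsHermitian) (t : ℝ) :
    (X * specProj hA t).trace.re = ∑ j, (if hA.eigenvalues j ≤ t then 1 else 0) *
      ((star (hA.eigenvectorUnitary : Matrix (Fin n) (Fin n) ℂ) * X * hA.eigenvectorUnitary)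
        j j).re := by
  rw [specProj_eq_conj_diagonal, re_trace_mul_conj_diagonal]

lemma re_trace_mul_of_isHermitian (X : Matrix (Fin n) (Fin n) ℂ) (hA : A.IsHermitian) :
    (X * A).trace.re = ∑ j, hA.eigenvalues j *
      ((star (hA.eigenvectorUnitary : Matrix (Fin n) (Fin n) ℂ) * X * hA.eigenvectorUnitary)
        j j).re := by
  conv_lhs => rw [hA.spectral_theorem, Unitary.conjStarAlgAut_apply]
  exact re_trace_mul_conj_diagonal _ _ _

lemma conj_specProj_self (hA : A.IsHermitian) (t : ℝ) :
    star (hA.eigenvectorUnitary : Matrix (Fin n) (Fin n) ℂ) * specProj hA t *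
      (hA.eigenvectorUnitary : Matrix (Fin n) (Fin n) ℂ) =
      diagonal (fun i => if hA.eigenvalues i ≤ t then 1 else 0) := by
  have h := mem_unitaryGroup_iff'.mp hA.eigenvectorUnitary.2
  unfold specProj
  rw [← Matrix.mul_assoc, ← Matrix.mul_assoc, h, Matrix.one_mul, Matrix.mul_assoc, h,
    Matrix.mul_one]

lemma re_conj_specProj_apply_mem_Icc (hA : A.IsHermitian) (hB : B.IsHermitian) (t : ℝ)
    (j : Fin n) :
    ((star (hA.eigenvectorUnitary : Matrix (Fin n) (Fin n) ℂ) * specProj hB t *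
      (hA.eigenvectorUnitary : Matrix (Fin n) (Fin n) ℂ)) j j).re ∈ Icc (0 : ℝ) 1 := by
  have hconj : star (hA.eigenvectorUnitary : Matrix (Fin n) (Fin n) ℂ) * specProj hB t *
      (hA.eigenvectorUnitary : Matrix (Fin n) (Fin n) ℂ) =
      ((star hA.eigenvectorUnitary * hB.eigenvectorUnitary : unitaryGroup (Fin n) ℂ) :
          Matrix (Fin n) (Fin n) ℂ) *
        diagonal (fun i => ((if hB.eigenvalues i ≤ t then 1 else 0 : ℝ) : ℂ)) *
        star ((star hA.eigenvectorUnitary * hB.eigenvectorUnitary : unitaryGroup (Fin n) ℂ) :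
          Matrix (Fin n) (Fin n) ℂ) := by
    rw [specProj_eq_conj_diagonal]
    simp only [Submonoid.coe_mul, Unitary.coe_star, star_mul, star_star, Matrix.mul_assoc]
  rw [hconj]
  exact re_conj_diagonal_apply_mem_Icc _ (fun i => by split_ifs <;> simp) j

lemma re_trace_sub_smul_one_mul (hA : A.IsHermitian) (t : ℝ) (P : Matrix (Fin n) (Fin n) ℂ) :
    ((A - (t : ℂ) • 1) * P).trace.re = ∑ j, (hA.eigenvalues j - t) *
      ((star (hA.eigenvectorUnitary : Matrix (Fin n) (Fin n) ℂ) * P * hA.eigenvectorUnitary)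
        j j).re := by
  rw [Matrix.sub_mul, trace_sub, Complex.sub_re, trace_mul_comm, re_trace_mul_of_isHermitian P hA,
    Matrix.smul_mul, Matrix.one_mul, trace_smul, smul_eq_mul, Complex.re_ofReal_mul,
    ← sum_re_diag_conj_unitary hA.eigenvectorUnitary P, Finset.mul_sum, ← Finset.sum_sub_distrib]
  simp only [sub_mul]

/-- In the eigenbasis of `A`, `(A - t) P` has diagonal `(μⱼ - t) pⱼ` with `pⱼ ∈ [0, 1]`,
and `pⱼ = 1[μⱼ ≤ t]` minimises every term. -/
lemma re_trace_sub_smul_one_mul_specProj_le (hA : A.IsHermitian) (hB : B.IsHermitian) (t : ℝ) :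
    ((A - (t : ℂ) • 1) * specProj hA t).trace.re ≤
      ((A - (t : ℂ) • 1) * specProj hB t).trace.re := by
  rw [re_trace_sub_smul_one_mul hA, re_trace_sub_smul_one_mul hA, conj_specProj_self]
  refine Finset.sum_le_sum fun j _ => ?_
  obtain ⟨h0, h1⟩ := re_conj_specProj_apply_mem_Icc hA hB t j
  rw [diagonal_apply_eq]
  split_ifs with h <;> simp only [Complex.one_re, Complex.zero_re] <;> nlinarith

lemma re_trace_sub_mul_specProj_sub_nonneg (hA : A.IsHermitian) (hB : B.IsHermitian) (t : ℝ) :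
    0 ≤ ((B - A) * (specProj hA t - specProj hB t)).trace.re := by
  have hsplit : (B - A) * (specProj hA t - specProj hB t) =
      ((B - (t : ℂ) • 1) * specProj hA t - (B - (t : ℂ) • 1) * specProj hB t) +
        ((A - (t : ℂ) • 1) * specProj hB t - (A - (t : ℂ) • 1) * specProj hA t) := by
    noncomm_ring
  rw [hsplit, trace_add, trace_sub, trace_sub, Complex.add_re, Complex.sub_re, Complex.sub_re]
  linarith [re_trace_sub_smul_one_mul_specProj_le hA hB t,
    re_trace_sub_smul_one_mul_specProj_le hB hA t]

lemma antitone_re_trace_mul_specProj {H₀ V : Matrix (Fin n) (Fin n) ℂ}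
    (hs : ∀ s : ℝ, (H₀ + (s : ℂ) • V).IsHermitian) (t : ℝ) :
    Antitone fun s => (V * specProj (hs s) t).trace.re := by
  intro s s' hss'
  have key := re_trace_sub_mul_specProj_sub_nonneg (hs s) (hs s') t
  have hdiff : H₀ + (s' : ℂ) • V - (H₀ + (s : ℂ) • V) = ((s' - s : ℝ) : ℂ) • V := by
    rw [Complex.ofReal_sub, sub_smul]
    abel
  rw [hdiff, Matrix.smul_mul, trace_smul, smul_eq_mul, Complex.re_ofReal_mul, Matrix.mul_sub,
    trace_sub, Complex.sub_re] at key
  rcases hss'.eq_or_lt with rfl | hlt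
  · exact le_rfl
  · exact sub_nonneg.mp (nonneg_of_mul_nonneg_right key (sub_pos.mpr hlt))

lemma continuousWithinAt_re_trace_mul_specProj (X : Matrix (Fin n) (Fin n) ℂ)
    (hA : A.IsHermitian) (t : ℝ) :
    ContinuousWithinAt (fun x => (X * specProj hA x).trace.re) (Ici t) t := by
  simp_rw [re_trace_mul_specProj]
  exact tendsto_finsetSum _ fun j _ =>
    (continuousWithinAt_Ici_ite_le _ t).mul continuousWithinAt_const

lemma re_trace_mul_specProj_sub_ite_eq_sum (X : Matrix (Fin n) (Fin n) ℂ) (hA : A.IsHermitian)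
    (t : ℝ) :
    (X * specProj hA t).trace.re - (if 0 ≤ t then 1 else 0) * X.trace.re =
      ∑ j, ((star (hA.eigenvectorUnitary : Matrix (Fin n) (Fin n) ℂ) * X *
          hA.eigenvectorUnitary) j j).re *
        ((if hA.eigenvalues j ≤ t then 1 else 0) - if 0 ≤ t then 1 else 0) := by
  rw [re_trace_mul_specProj, ← sum_re_diag_conj_unitary hA.eigenvectorUnitary X, Finset.mul_sum,
    ← Finset.sum_sub_distrib]
  exact Finset.sum_congr rfl fun j _ => by ring

lemma integrable_re_trace_mul_specProj_sub_ite (X : Matrix (Fin n) (Fin n) ℂ)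
    (hA : A.IsHermitian) :
    Integrable fun t => (X * specProj hA t).trace.re - (if 0 ≤ t then 1 else 0) * X.trace.re := by
  simp_rw [re_trace_mul_specProj_sub_ite_eq_sum]
  exact integrable_finsetSum _ fun j _ => (integrable_ite_le_sub_ite_le _ 0).const_mul _

/-- The matrix form of `A = ∫ t dE_A(t)`. -/
lemma integral_re_trace_mul_specProj_sub_ite (X : Matrix (Fin n) (Fin n) ℂ)
    (hA : A.IsHermitian) :
    ∫ t, ((X * specProj hA t).trace.re - (if 0 ≤ t then 1 else 0) * X.trace.re) =
      -(X * A).trace.re := by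
  simp_rw [re_trace_mul_specProj_sub_ite_eq_sum]
  rw [integral_finsetSum _ fun j _ => (integrable_ite_le_sub_ite_le _ 0).const_mul _,
    re_trace_mul_of_isHermitian X hA, ← Finset.sum_neg_distrib]
  refine Finset.sum_congr rfl fun j _ => ?_
  rw [integral_const_mul, integral_ite_le_sub_ite_le]
  ring

lemma re_trace_mul_specProj_sub_eq (X : Matrix (Fin n) (Fin n) ℂ) (hA : A.IsHermitian)
    (hB : B.IsHermitian) (t : ℝ) :
    (X * (specProj hA t - specProj hB t)).trace.re =
      ((X * specProj hA t).trace.re - (if 0 ≤ t then 1 else 0) * X.trace.re) -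
        ((X * specProj hB t).trace.re - (if 0 ≤ t then 1 else 0) * X.trace.re) := by
  rw [Matrix.mul_sub, trace_sub, Complex.sub_re]
  ring

lemma integrable_re_trace_mul_specProj_sub (X : Matrix (Fin n) (Fin n) ℂ) (hA : A.IsHermitian)
    (hB : B.IsHermitian) :
    Integrable fun t => (X * (specProj hA t - specProj hB t)).trace.re := by
  simp_rw [re_trace_mul_specProj_sub_eq X hA hB]
  exact (integrable_re_trace_mul_specProj_sub_ite X hA).sub
    (integrable_re_trace_mul_specProj_sub_ite X hB)

lemma integral_re_trace_mul_specProj_sub (X : Matrix (Fin n) (Fin n) ℂ) (hA : A.IsHermitian)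
    (hB : B.IsHermitian) :
    ∫ t, (X * (specProj hA t - specProj hB t)).trace.re = (X * (B - A)).trace.re := by
  simp_rw [re_trace_mul_specProj_sub_eq X hA hB]
  rw [integral_sub (integrable_re_trace_mul_specProj_sub_ite X hA)
    (integrable_re_trace_mul_specProj_sub_ite X hB), integral_re_trace_mul_specProj_sub_ite,
    integral_re_trace_mul_specProj_sub_ite, Matrix.mul_sub, trace_sub, Complex.sub_re]
  ring

end SpecProj

theorem stmt_6_general {n : ℕ} (H₀ V : Matrix (Fin n) (Fin n) ℂ)
    (hV : V.IsHermitian)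
    (hs' : ∀ s : ℝ, (H₀ + (s : ℂ) • V).IsHermitian)
    (η : ℝ → ℝ)
    (hη : ∀ lam : ℝ, η lam =
      ∫ s in (0:ℝ)..1, ((V * (specProj (hs' 0) lam - specProj (hs' s) lam)).trace).re) :
    (∀ lam : ℝ, 0 ≤ η lam) ∧ MeasureTheory.Integrable η ∧
      ∫ lam : ℝ, η lam = (1 / 2) * ((Vᴴ * V).trace).re := by
  set φ : ℝ × ℝ → ℝ := fun p => ((V * (specProj (hs' 0) p.2 - specProj (hs' p.1) p.2)).trace).re
  have hφ_nonneg : ∀ s, 0 ≤ s → ∀ t, 0 ≤ φ (s, t) := fun s hs t => by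
    simpa only [φ, Matrix.mul_sub, trace_sub, Complex.sub_re, sub_nonneg] using
      antitone_re_trace_mul_specProj hs' t hs
  have hφ_meas : Measurable φ := by
    have h := measurable_uncurry_of_continuousWithinAt_Ici
      (fun t => (antitone_re_trace_mul_specProj hs' t).measurable)
      (fun s => continuousWithinAt_re_trace_mul_specProj V (hs' s))
    simp only [φ, Matrix.mul_sub, trace_sub, Complex.sub_re]
    exact (h.comp (measurable_const.prodMk measurable_snd)).sub h
  have hφ_integral : ∀ s, ∫ t, φ (s, t) = s * ((Vᴴ * V).trace).re := fun s => by
    rw [integral_re_trace_mul_specProj_sub V (hs' 0) (hs' s), add_sub_add_left_eq_sub,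
      ← sub_smul, hV.eq, Matrix.mul_smul, trace_smul, smul_eq_mul, ← Complex.ofReal_sub, sub_zero,
      Complex.re_ofReal_mul]
  have hφ_int : Integrable φ ((volume.restrict (Ioc 0 1)).prod volume) :=
    integrable_prod_of_nonneg hφ_meas.aestronglyMeasurable
      (ae_restrict_of_forall_mem measurableSet_Ioc fun s hs => hφ_nonneg s hs.1.le)
      (Eventually.of_forall fun s => integrable_re_trace_mul_specProj_sub V (hs' 0) (hs' s))
      (by simp_rw [hφ_integral]; exact (continuous_id.mul continuous_const).integrableOn_Ioc)
  have hη_eq : η = fun t => ∫ s in Ioc 0 1, φ (s, t) :=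
    funext fun t => by rw [hη, intervalIntegral.integral_of_le zero_le_one]
  refine ⟨fun t => ?_, hη_eq ▸ hφ_int.integral_prod_right, ?_⟩
  · rw [hη]
    exact intervalIntegral.integral_nonneg zero_le_one fun s hs => hφ_nonneg s hs.1 t
  · rw [hη_eq, ← integral_integral_swap hφ_int]
    simp_rw [hφ_integral]
    rw [← intervalIntegral.integral_of_le zero_le_one, intervalIntegral.integral_mul_const,
      integral_id]
    ring

/-- The Koplienko spectral shift function
`η(λ) = ∫₀¹ Tr(V(E₀(λ) − E_s(λ))) ds` of a pair of Hermitian matrices is non-negative,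
integrable, and `∫_ℝ η(λ) dλ = ½ ‖V‖₂²` where `‖V‖₂² = Tr(V* V)`. -/
theorem stmt_6 {n : ℕ} (H₀ V : Matrix (Fin n) (Fin n) ℂ)
    (hH₀ : H₀.IsHermitian) (hV : V.IsHermitian)
    (hs' : ∀ s : ℝ, (H₀ + (s : ℂ) • V).IsHermitian)
    (η : ℝ → ℝ)
    (hη : ∀ lam : ℝ, η lam =
      ∫ s in (0:ℝ)..1, ((V * (specProj (hs' 0) lam - specProj (hs' s) lam)).trace).re) :
    (∀ lam : ℝ, 0 ≤ η lam) ∧ MeasureTheory.Integrable η ∧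
      ∫ lam : ℝ, η lam = (1 / 2) * ((Vᴴ * V).trace).re :=
  stmt_6_general H₀ V hV hs' η hη
end

section
/- Let H₀ be a bounded self-adjoint operator on a Hilbert space and V bounded. Then the map A ↦ e^{itA} is Fréchet differentiable at H₀ with D(e^{itH₀})·V = it ∫₀¹ e^{itαH₀} V e^{it(1−α)H₀} dα. -/
/-!
Duhamel's formula `e^Y - e^X = ∫₀¹ e^{αY} (Y - X) e^{(1-α)X} dα` (the fundamental theorem of
calculus for `α ↦ e^{αY} e^{(1-α)X}`) writes the increment of `exp` as `Φ(Y) (Y - X)`, where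
`Φ(Y) = ∫₀¹ e^{αY} · e^{(1-α)X} dα` depends continuously on `Y`. Any such factorisation with `Φ`
continuous at `X` makes `Φ(X)` the Fréchet derivative at `X`; the chain rule through `A ↦ itA`
gives the stated formula.
-/

open NormedSpace Filter Topology Asymptotics

section

variable {𝕜 E F : Type*} [NontriviallyNormedField 𝕜] [NormedAddCommGroup E] [NormedSpace 𝕜 E]
  [NormedAddCommGroup F] [NormedSpace 𝕜 F]

theorem hasFDerivAt_of_sub_eq_apply {f : E → F} {Φ : E → E →L[𝕜] F} {x : E}
    (hf : ∀ y, f y - f x = Φ y (y - x)) (hΦ : ContinuousAt Φ x) :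
    HasFDerivAt f (Φ x) x := by
  rw [hasFDerivAt_iff_isLittleO_nhds_zero, isLittleO_iff]
  intro c hc
  have hΦ' : Tendsto (fun h => Φ (x + h)) (𝓝 0) (𝓝 (Φ x)) :=
    hΦ.tendsto.comp (by simpa using (continuous_const_add x).tendsto 0)
  filter_upwards [(tendsto_iff_norm_sub_tendsto_zero.1 hΦ').eventually (Iic_mem_nhds hc)]
    with h hh
  have hrem : f (x + h) - f x - Φ x h = (Φ (x + h) - Φ x) h := by
    rw [hf, add_sub_cancel_left, sub_apply]
  rw [hrem]
  exact ((Φ (x + h) - Φ x).le_opNorm h).trans (mul_le_mul_of_nonneg_right hh (norm_nonneg h))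

end

section

variable {𝕜 𝔸 : Type*} [RCLike 𝕜] [NormedRing 𝔸] [NormedAlgebra 𝕜 𝔸]
  [NormedAlgebra ℝ 𝔸] [CompleteSpace 𝔸]

variable (𝕜) in
noncomputable def duhamel (X Y : 𝔸) : 𝔸 →L[𝕜] 𝔸 :=
  ∫ α in (0 : ℝ)..1, ContinuousLinearMap.mulLeftRight 𝕜 𝔸 (exp (α • Y)) (exp ((1 - α) • X))

@[fun_prop]
theorem continuous_exp_real : Continuous (exp : 𝔸 → 𝔸) :=
  continuous_iff_continuousAt.2 fun x => (exp_analytic (𝕂 := ℝ) x).continuousAt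

theorem continuous_duhamel_integrand (X : 𝔸) :
    Continuous fun p : 𝔸 × ℝ =>
      ContinuousLinearMap.mulLeftRight 𝕜 𝔸 (exp (p.2 • p.1)) (exp ((1 - p.2) • X)) := by
  fun_prop

theorem continuous_duhamel (X : 𝔸) : Continuous (duhamel 𝕜 X) :=
  intervalIntegral.continuous_parametric_intervalIntegral_of_continuous'
    (continuous_duhamel_integrand X) 0 1

theorem duhamel_apply (X Y V : 𝔸) :
    duhamel 𝕜 X Y V = ∫ α in (0 : ℝ)..1, exp (α • Y) * V * exp ((1 - α) • X) := by
  rw [duhamel, ContinuousLinearMap.intervalIntegral_apply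
    (((continuous_duhamel_integrand X).comp (Continuous.prodMk_right Y)).intervalIntegrable 0 1)]
  rfl

theorem hasDerivAt_exp_smul_mul_exp_one_sub_smul (X Y : 𝔸) (s : ℝ) :
    HasDerivAt (fun s : ℝ => exp (s • Y) * exp ((1 - s) • X))
      (exp (s • Y) * (Y - X) * exp ((1 - s) • X)) s := by
  have hY := hasDerivAt_exp_smul_const Y s
  have hX : HasDerivAt (fun s : ℝ => exp ((1 - s) • X)) (-(X * exp ((1 - s) • X))) s := by
    simpa [Function.comp_def] using
      (hasDerivAt_exp_smul_const' X (1 - s)).scomp s ((hasDerivAt_id s).const_sub 1)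
  exact (hY.mul hX).congr_deriv (by noncomm_ring)

theorem exp_sub_exp_eq_duhamel_apply (X Y : 𝔸) :
    exp Y - exp X = duhamel 𝕜 X Y (Y - X) := by
  rw [duhamel_apply, intervalIntegral.integral_eq_sub_of_hasDerivAt
    (fun s _ => hasDerivAt_exp_smul_mul_exp_one_sub_smul X Y s)]
  · simp
  · exact Continuous.intervalIntegrable (by fun_prop) 0 1

theorem hasFDerivAt_exp_duhamel (X : 𝔸) : HasFDerivAt exp (duhamel 𝕜 X X) X :=
  hasFDerivAt_of_sub_eq_apply (fun Y => exp_sub_exp_eq_duhamel_apply X Y)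
    (continuous_duhamel X).continuousAt

theorem hasFDerivAt_exp_const_smul (c : 𝕜) (X : 𝔸) :
    HasFDerivAt (fun A : 𝔸 => exp (c • A)) (c • duhamel 𝕜 (c • X) (c • X)) X := by
  have h := (hasFDerivAt_exp_duhamel (c • X)).comp X ((hasFDerivAt_id (𝕜 := 𝕜) X).const_smul c)
  rwa [ContinuousLinearMap.comp_smul, ContinuousLinearMap.comp_id] at h

end

theorem stmt_8_general {𝓗 : Type*} [NormedAddCommGroup 𝓗] [InnerProductSpace ℂ 𝓗] [CompleteSpace 𝓗]
    (H₀ : 𝓗 →L[ℂ] 𝓗) (t : ℝ) :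
    ∃ D : (𝓗 →L[ℂ] 𝓗) →L[ℂ] (𝓗 →L[ℂ] 𝓗),
      HasFDerivAt (fun A : 𝓗 →L[ℂ] 𝓗 => NormedSpace.exp ((Complex.I * t) • A)) D H₀ ∧
      ∀ V : 𝓗 →L[ℂ] 𝓗,
        D V = (Complex.I * t) •
          ∫ α in (0:ℝ)..1,
            NormedSpace.exp (((α : ℂ) * Complex.I * t) • H₀) * V *
              NormedSpace.exp ((((1 : ℂ) - (α : ℂ)) * Complex.I * t) • H₀) := by
  have hsmul (s : ℝ) : ((s : ℂ) * Complex.I * t) • H₀ = s • ((Complex.I * t) • H₀) := by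
    rw [mul_assoc, ← smul_smul, Complex.coe_smul]
  refine ⟨_, hasFDerivAt_exp_const_smul _ H₀, fun V => ?_⟩
  rw [smul_apply, duhamel_apply]
  congr 1
  refine intervalIntegral.integral_congr fun α _ => ?_
  rw [hsmul, ← Complex.ofReal_one, ← Complex.ofReal_sub, hsmul]

/-- The map `A ↦ e^{itA}` on bounded operators is Fréchet differentiable at a
bounded self-adjoint operator `H₀`, with derivative
`V ↦ it ∫₀¹ e^{itαH₀} V e^{it(1−α)H₀} dα` (Bochner integral in operator norm). -/
theorem stmt_8 {𝓗 : Type*} [NormedAddCommGroup 𝓗] [InnerProductSpace ℂ 𝓗] [CompleteSpace 𝓗]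
    (H₀ : 𝓗 →L[ℂ] 𝓗) (hH₀ : IsSelfAdjoint H₀) (t : ℝ) :
    ∃ D : (𝓗 →L[ℂ] 𝓗) →L[ℂ] (𝓗 →L[ℂ] 𝓗),
      HasFDerivAt (fun A : 𝓗 →L[ℂ] 𝓗 => NormedSpace.exp ((Complex.I * t) • A)) D H₀ ∧
      ∀ V : 𝓗 →L[ℂ] 𝓗,
        D V = (Complex.I * t) •
          ∫ α in (0:ℝ)..1,
            NormedSpace.exp (((α : ℂ) * Complex.I * t) • H₀) * V *
              NormedSpace.exp ((((1 : ℂ) - (α : ℂ)) * Complex.I * t) • H₀) :=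
  stmt_8_general H₀ t
end

section
/- Let H₀ be a self-adjoint operator and V a bounded self-adjoint operator, H = H₀ + V. Then for t ∈ ℝ, e^{itH} − e^{itH₀} − it∫₀¹ e^{itαH₀} V e^{it(1−α)H₀} dα = (it)² ∫₀¹ α dα ∫₀¹ dβ e^{itαβH} V e^{itα(1−β)H₀} V e^{it(1−α)H₀}. -/
/-!
Differentiating `α ↦ e^{αs(X+V)} e^{(1-α)sX}` gives `s e^{αs(X+V)} V e^{(1-α)sX}`, so integrating
over `[0, 1]` yields the first-order Duhamel formula. Subtracting its `V = 0` counterpart, the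
integrand becomes `(e^{αs(X+V)} - e^{αsX}) V e^{(1-α)sX}`, and the first-order formula at
parameter `αs` expands the bracket once more, its prefactor `αs` supplying the weight `α` and
the second power of `s`.
-/

open NormedSpace intervalIntegral

section BanachAlgebra

variable {A : Type*} [NormedRing A] [NormedAlgebra ℂ A] [CompleteSpace A]

@[fun_prop]
theorem Continuous.exp_smul_const {f : ℝ → ℂ} (hf : Continuous f) (Y : A) :
    Continuous fun u => NormedSpace.exp (f u • Y) :=
  (differentiable_exp_smul_const ℂ Y).continuous.comp hf

theorem HasDerivAt.exp_smul_const {f : ℝ → ℂ} {f' : ℂ} {u : ℝ} (hf : HasDerivAt f f' u) (Y : A) :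
    HasDerivAt (fun u => NormedSpace.exp (f u • Y)) (f' • (Y * NormedSpace.exp (f u • Y))) u :=
  (hasDerivAt_exp_smul_const' Y (f u)).scomp u hf

theorem intervalIntegral.integral_mul_const_of_intervalIntegrable {f : ℝ → A} {a b : ℝ}
    (hf : IntervalIntegrable f MeasureTheory.volume a b) (c : A) :
    ∫ x in a..b, f x * c = (∫ x in a..b, f x) * c :=
  ((ContinuousLinearMap.mul ℂ A).flip c).intervalIntegral_comp_comm hf

theorem duhamel_first_order (X V : A) (s : ℂ) :
    exp (s • (X + V)) - exp (s • X) =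
      s • ∫ α in (0:ℝ)..1, exp (((α : ℂ) * s) • (X + V)) * V * exp (((1 - (α : ℂ)) * s) • X) := by
  set F : ℝ → A := fun α => exp (((α : ℂ) * s) • (X + V)) * exp (((1 - (α : ℂ)) * s) • X)
  have hF (α : ℝ) : HasDerivAt F
      (s • (exp (((α : ℂ) * s) • (X + V)) * V * exp (((1 - (α : ℂ)) * s) • X))) α := by
    have hα : HasDerivAt (fun u : ℝ => (u : ℂ)) 1 α := by simpa using (hasDerivAt_id' α).ofReal_comp
    refine (((hα.mul_const s).exp_smul_const (X + V)).mul
      (((hα.const_sub 1).mul_const s).exp_smul_const X)).congr_deriv ?_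
    have hcomm : Commute (X + V) (exp (((α : ℂ) * s) • (X + V))) :=
      ((Commute.refl _).smul_right _).exp_right
    rw [hcomm.eq]
    simp only [one_mul, neg_mul, neg_smul, smul_mul_assoc, mul_smul_comm, mul_neg, mul_add,
      add_mul, mul_assoc, smul_add]
    abel
  have hFTC := integral_eq_sub_of_hasDerivAt (fun α _ => hF α)
    (Continuous.intervalIntegrable (by fun_prop) 0 1)
  simpa [F, integral_smul, smul_add] using hFTC.symm

theorem duhamel_second_order (X V : A) (s : ℂ) :
    exp (s • (X + V)) - exp (s • X) -
        s • ∫ α in (0:ℝ)..1, exp (((α : ℂ) * s) • X) * V * exp (((1 - (α : ℂ)) * s) • X) =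
      s ^ 2 • ∫ α in (0:ℝ)..1, (α : ℂ) •
        ∫ β in (0:ℝ)..1,
          exp (((α : ℂ) * ((β : ℂ) * s)) • (X + V)) * V *
            exp (((α : ℂ) * ((1 - (β : ℂ)) * s)) • X) * V * exp (((1 - (α : ℂ)) * s) • X) := by
  have hinner (α : ℝ) :
      exp (((α : ℂ) * s) • (X + V)) * V * exp (((1 - (α : ℂ)) * s) • X) -
          exp (((α : ℂ) * s) • X) * V * exp (((1 - (α : ℂ)) * s) • X) =
        s • (α : ℂ) • ∫ β in (0:ℝ)..1,
          exp (((α : ℂ) * ((β : ℂ) * s)) • (X + V)) * V *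
            exp (((α : ℂ) * ((1 - (β : ℂ)) * s)) • X) * V * exp (((1 - (α : ℂ)) * s) • X) := by
    rw [← sub_mul, ← sub_mul, duhamel_first_order X V ((α : ℂ) * s), smul_mul_assoc,
      smul_mul_assoc, ← integral_mul_const_of_intervalIntegrable
        (Continuous.intervalIntegrable (by fun_prop) 0 1),
      ← integral_mul_const_of_intervalIntegrable
        (Continuous.intervalIntegrable (by fun_prop) 0 1), mul_smul, smul_comm (α : ℂ) s]
    congr 2
    refine integral_congr fun β _ => ?_
    simp only [mul_left_comm (β : ℂ), mul_left_comm (1 - (β : ℂ))]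
  rw [duhamel_first_order X V s, ← smul_sub, ← integral_sub
      (Continuous.intervalIntegrable (by fun_prop) 0 1)
      (Continuous.intervalIntegrable (by fun_prop) 0 1),
    integral_congr fun α _ => hinner α, integral_smul, smul_smul, sq]

end BanachAlgebra

theorem stmt_9_general {𝓗 : Type*} [NormedAddCommGroup 𝓗] [InnerProductSpace ℂ 𝓗] [CompleteSpace 𝓗]
    (H₀ V : 𝓗 →L[ℂ] 𝓗) (t : ℝ)
    (H : 𝓗 →L[ℂ] 𝓗) (hH : H = H₀ + V) :
    NormedSpace.exp ((Complex.I * t) • H) - NormedSpace.exp ((Complex.I * t) • H₀) -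
        (Complex.I * t) •
          ∫ α in (0:ℝ)..1,
            NormedSpace.exp (((α : ℂ) * Complex.I * t) • H₀) * V *
              NormedSpace.exp ((((1 : ℂ) - (α : ℂ)) * Complex.I * t) • H₀) =
      ((Complex.I * t) ^ 2) •
        ∫ α in (0:ℝ)..1, (α : ℂ) •
          ∫ β in (0:ℝ)..1,
            NormedSpace.exp (((α : ℂ) * (β : ℂ) * Complex.I * t) • H) * V *
              NormedSpace.exp (((α : ℂ) * ((1 : ℂ) - (β : ℂ)) * Complex.I * t) • H₀) * V *
                NormedSpace.exp ((((1 : ℂ) - (α : ℂ)) * Complex.I * t) • H₀) := by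
  subst hH
  simpa only [mul_assoc] using duhamel_second_order H₀ V (Complex.I * t)

/-- Second-order Duhamel formula: for self-adjoint `H₀`, bounded self-adjoint
`V` and `H = H₀ + V`,
`e^{itH} − e^{itH₀} − it∫₀¹ e^{itαH₀}Ve^{it(1−α)H₀}dα
  = (it)² ∫₀¹ α dα ∫₀¹ dβ e^{itαβH} V e^{itα(1−β)H₀} V e^{it(1−α)H₀}`. -/
theorem stmt_9 {𝓗 : Type*} [NormedAddCommGroup 𝓗] [InnerProductSpace ℂ 𝓗] [CompleteSpace 𝓗]
    (H₀ V : 𝓗 →L[ℂ] 𝓗) (hH₀ : IsSelfAdjoint H₀) (hV : IsSelfAdjoint V) (t : ℝ)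
    (H : 𝓗 →L[ℂ] 𝓗) (hH : H = H₀ + V) :
    NormedSpace.exp ((Complex.I * t) • H) - NormedSpace.exp ((Complex.I * t) • H₀) -
        (Complex.I * t) •
          ∫ α in (0:ℝ)..1,
            NormedSpace.exp (((α : ℂ) * Complex.I * t) • H₀) * V *
              NormedSpace.exp ((((1 : ℂ) - (α : ℂ)) * Complex.I * t) • H₀) =
      ((Complex.I * t) ^ 2) •
        ∫ α in (0:ℝ)..1, (α : ℂ) •
          ∫ β in (0:ℝ)..1,
            NormedSpace.exp (((α : ℂ) * (β : ℂ) * Complex.I * t) • H) * V *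
              NormedSpace.exp (((α : ℂ) * ((1 : ℂ) - (β : ℂ)) * Complex.I * t) • H₀) * V *
                NormedSpace.exp ((((1 : ℂ) - (α : ℂ)) * Complex.I * t) • H₀) :=
  stmt_9_general H₀ V t H hH
end

section
/- Let A be a self-adjoint operator on a separable Hilbert space with spectral measure F, let f₁,…,f_L be unit vectors, and ε > 0. Then there exists a finite-rank orthogonal projection P with range contained in Dom(A) such that ‖(I−P)f_l‖ < ε for all l, and (I−P)AP is a finite-rank operator with Hilbert–Schmidt norm ‖(I−P)AP‖₂ < ε. -/
/-!
Cut a neighbourhood of the spectrum of `A` into `N` cells of width `w` and replace the spectral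
projections of the cells by continuous bumps `φₘ` vanishing outside their cell. The spaces
`Vₘ = φₘ(A) (span {f_l})` are then mutually orthogonal, have dimension at most `L`, and consist of
approximate eigenvectors: `‖(A - cₘ) v‖ ≤ (w / 2) ‖v‖`. For the projection `P` onto `⨁ Vₘ` this
gives `‖(1 - P) A P‖₂² ≤ N L (w / 2)²`, which is small because `N w` stays bounded.

Since `∑ φₘ = 1` away from the cut points, `f_l - ∑ₘ φₘ(A) f_l = D(A) f_l` for a sum `D` of tents
around the cut points. Shifting the grid by multiples of `w / K` gives `K` such sums `D_s` with
pairwise disjoint supports, so `∑_s ‖D_s(A) f_l‖² ≤ ‖f_l‖²`, and for some shift every defect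
`‖(1 - P) f_l‖ ≤ ‖D_s(A) f_l‖` is below `ε`.
-/

/-- The Hilbert–Schmidt norm of `T` (w.r.t. the Hilbert basis `bas`). -/
noncomputable def hsNorm {𝓗 : Type*} [NormedAddCommGroup 𝓗] [InnerProductSpace ℂ 𝓗]
    [CompleteSpace 𝓗] {ι : Type*} (bas : HilbertBasis ι ℂ 𝓗) (T : 𝓗 →L[ℂ] 𝓗) : ℝ :=
  Real.sqrt (∑' i, ‖T (bas i)‖ ^ 2)

open Finset Submodule
open scoped InnerProductSpace

namespace WeylVonNeumann

noncomputable def ramp (η t x : ℝ) : ℝ := max 0 (min 1 ((t - x) / η))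

noncomputable def cellBump (η a b x : ℝ) : ℝ := ramp η b x - ramp η (a + η) x

noncomputable def tent (η t x : ℝ) : ℝ := ramp η (t + η) x - ramp η t x

section Ramp

variable {η t x : ℝ}

@[fun_prop]
lemma continuous_ramp (η t : ℝ) : Continuous (ramp η t) := by
  unfold ramp; fun_prop

@[fun_prop]
lemma continuous_cellBump (η a b : ℝ) : Continuous (cellBump η a b) := by
  unfold cellBump; fun_prop

@[fun_prop]
lemma continuous_tent (η t : ℝ) : Continuous (tent η t) := by
  unfold tent; fun_prop

lemma ramp_nonneg : 0 ≤ ramp η t x := le_max_left _ _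

lemma ramp_le_one : ramp η t x ≤ 1 := max_le zero_le_one (min_le_left _ _)

lemma ramp_of_le_sub (hη : 0 < η) (hx : x ≤ t - η) : ramp η t x = 1 := by
  have : 1 ≤ (t - x) / η := by rw [le_div_iff₀ hη]; linarith
  simp [ramp, min_eq_left this]

lemma ramp_of_le (hη : 0 ≤ η) (hx : t ≤ x) : ramp η t x = 0 :=
  max_eq_left (min_le_of_right_le (div_nonpos_of_nonpos_of_nonneg (by linarith) hη))

lemma ramp_le_ramp (hη : 0 ≤ η) {t' : ℝ} (h : t ≤ t') : ramp η t x ≤ ramp η t' x := by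
  unfold ramp
  gcongr

lemma cellBump_eq_zero {a b : ℝ} (hη : 0 < η) (hab : a + η ≤ b) (hx : x ∉ Set.Ioo a b) :
    cellBump η a b x = 0 := by
  rcases le_or_gt x a with hxa | hax
  · rw [cellBump, ramp_of_le_sub hη (by linarith), ramp_of_le_sub hη (by linarith), sub_self]
  · have hbx : b ≤ x := not_lt.mp fun hxb => hx ⟨hax, hxb⟩
    rw [cellBump, ramp_of_le hη.le hbx, ramp_of_le hη.le (by linarith), sub_self]

lemma mem_Ioo_of_cellBump_ne_zero {a b : ℝ} (hη : 0 < η) (hab : a + η ≤ b)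
    (hx : cellBump η a b x ≠ 0) : x ∈ Set.Ioo a b :=
  not_not.mp fun h => hx (cellBump_eq_zero hη hab h)

lemma cellBump_mul_cellBump_eq_zero {a b a' b' : ℝ} (hη : 0 < η) (hab : a + η ≤ b)
    (ha'b' : a' + η ≤ b') (hba' : b ≤ a') : cellBump η a b x * cellBump η a' b' x = 0 := by
  by_cases hx : x ∈ Set.Ioo a b
  · rw [cellBump_eq_zero hη ha'b' fun h => by linarith [hx.2, h.1], mul_zero]
  · rw [cellBump_eq_zero hη hab hx, zero_mul]

lemma abs_sub_midpoint_le_of_cellBump_ne_zero {a b : ℝ} (hη : 0 < η) (hab : a + η ≤ b)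
    (hx : cellBump η a b x ≠ 0) : |x - (a + b) / 2| ≤ (b - a) / 2 := by
  obtain ⟨hax, hxb⟩ := mem_Ioo_of_cellBump_ne_zero hη hab hx
  rw [abs_le]
  constructor <;> linarith

lemma tent_nonneg (hη : 0 ≤ η) : 0 ≤ tent η t x :=
  sub_nonneg.mpr (ramp_le_ramp hη (by linarith))

lemma tent_le_one : tent η t x ≤ 1 := by
  rw [tent]
  linarith [ramp_le_one (η := η) (t := t + η) (x := x), ramp_nonneg (η := η) (t := t) (x := x)]

lemma tent_eq_zero (hη : 0 < η) (hx : η ≤ |x - t|) : tent η t x = 0 := by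
  rcases le_abs'.mp hx with h | h
  · rw [tent, ramp_of_le_sub hη (by linarith), ramp_of_le_sub hη (by linarith), sub_self]
  · rw [tent, ramp_of_le hη.le (by linarith), ramp_of_le hη.le (by linarith), sub_self]

lemma sum_tent_le_one {κ : Type*} (S : Finset κ) (c : κ → ℝ) (hη : 0 < η)
    (hc : ∀ p ∈ S, ∀ q ∈ S, p ≠ q → 2 * η ≤ |c p - c q|) (x : ℝ) :
    ∑ p ∈ S, tent η (c p) x ≤ 1 := by
  by_cases hx : ∃ p ∈ S, |x - c p| < η
  · obtain ⟨p, hp, hxp⟩ := hx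
    rw [Finset.sum_eq_single_of_mem p hp fun q hq hqp => tent_eq_zero hη ?_]
    · exact tent_le_one
    · have := hc p hp q hq hqp.symm
      calc η ≤ |c p - c q| - |x - c p| := by linarith
        _ ≤ |x - c q| := by
          have := abs_sub_le (c p) x (c q)
          rw [abs_sub_comm (c p) x] at this
          linarith
  · push Not at hx
    rw [Finset.sum_eq_zero fun p hp => tent_eq_zero hη (hx p hp)]
    exact zero_le_one

lemma sum_range_cellBump (c : ℕ → ℝ) (N : ℕ) (x : ℝ) :
    ∑ m ∈ range N, cellBump η (c m) (c (m + 1)) x =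
      ramp η (c N) x - ramp η (c 0) x - ∑ m ∈ range N, tent η (c m) x := by
  rw [← Finset.sum_range_sub (fun m => ramp η (c m) x), ← Finset.sum_sub_distrib]
  refine Finset.sum_congr rfl fun m _ => ?_
  simp only [cellBump, tent]
  ring

lemma sum_sum_tent_le_one {τ : ℝ} (hτ : 0 < τ) (a : ℝ) (K N : ℕ) (x : ℝ) :
    ∑ s ∈ range K, ∑ m ∈ range N, tent (τ / 2) (a + ((s + K * m : ℕ) : ℝ) * τ) x ≤ 1 := by
  rw [← sum_product']
  refine sum_tent_le_one _ _ (half_pos hτ) ?_ x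
  rintro ⟨s, m⟩ hp ⟨s', m'⟩ hq hne
  simp only [mem_product, mem_range] at hp hq
  have hidx : s + K * m ≠ s' + K * m' := by
    intro h
    have hs : s = s' := by
      simpa [Nat.add_mul_mod_self_left, Nat.mod_eq_of_lt hp.1, Nat.mod_eq_of_lt hq.1] using
        congrArg (· % K) h
    subst hs
    exact hne (Prod.ext rfl (Nat.eq_of_mul_eq_mul_left (by omega) (Nat.add_left_cancel h)))
  have hone : (1 : ℝ) ≤ |((s + K * m : ℕ) : ℝ) - ((s' + K * m' : ℕ) : ℝ)| := by
    rcases lt_or_gt_of_ne hidx with h | h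
    · rw [abs_sub_comm, abs_of_pos (sub_pos.mpr (Nat.cast_lt.mpr h))]
      have : ((s + K * m : ℕ) : ℝ) + 1 ≤ ((s' + K * m' : ℕ) : ℝ) := by exact_mod_cast h
      linarith
    · rw [abs_of_pos (sub_pos.mpr (Nat.cast_lt.mpr h))]
      have : ((s' + K * m' : ℕ) : ℝ) + 1 ≤ ((s + K * m : ℕ) : ℝ) := by exact_mod_cast h
      linarith
  calc 2 * (τ / 2) = 1 * τ := by ring
    _ ≤ |((s + K * m : ℕ) : ℝ) - ((s' + K * m' : ℕ) : ℝ)| * τ := by gcongr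
    _ = |(a + ((s + K * m : ℕ) : ℝ) * τ) - (a + ((s' + K * m' : ℕ) : ℝ) * τ)| := by
        rw [add_sub_add_left_eq_sub, ← sub_mul, abs_mul, abs_of_pos hτ]

end Ramp

section Projection

variable {𝕜 E : Type*} [RCLike 𝕜] [NormedAddCommGroup E] [InnerProductSpace 𝕜 E]

lemma starProjection_span_range_apply {κ : Type*} [Fintype κ] {u : κ → E}
    [(span 𝕜 (Set.range u)).HasOrthogonalProjection] (hu : Orthonormal 𝕜 u) (x : E) :
    (span 𝕜 (Set.range u)).starProjection x = ∑ p, ⟪u p, x⟫_𝕜 • u p := by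
  refine eq_starProjection_of_mem_orthogonal'
    (sum_mem fun p _ => smul_mem _ _ (subset_span ⟨p, rfl⟩)) ?_ (add_sub_cancel _ x).symm
  have hperp : span 𝕜 (Set.range u) ≤ (𝕜 ∙ (x - ∑ p, ⟪u p, x⟫_𝕜 • u p))ᗮ := by
    rw [span_le]
    rintro _ ⟨q, rfl⟩
    rw [SetLike.mem_coe, mem_orthogonal_singleton_iff_inner_left, inner_sub_right,
      hu.inner_right_fintype, sub_self]
  exact (mem_orthogonal _ _).mpr fun w hw =>
    inner_left_of_mem_orthogonal (mem_span_singleton_self _) (hperp hw)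

lemma hasSum_norm_sq_sum_inner_smul {κ ι : Type*} [Fintype κ] {u : κ → E}
    (hu : Orthonormal 𝕜 u) (w : κ → E) (b : HilbertBasis ι 𝕜 E) :
    HasSum (fun i => ‖∑ p, ⟪u p, b i⟫_𝕜 • w p‖ ^ 2) (∑ p, ‖w p‖ ^ 2) := by
  have hexpand : ∀ i, ‖∑ p, ⟪u p, b i⟫_𝕜 • w p‖ ^ 2 =
      RCLike.re (∑ p, ∑ q, ⟪w p, w q⟫_𝕜 * (⟪u q, b i⟫_𝕜 * ⟪b i, u p⟫_𝕜)) := by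
    intro i
    rw [← inner_self_eq_norm_sq (𝕜 := 𝕜), sum_inner]
    simp_rw [inner_sum, inner_smul_left, inner_smul_right, inner_conj_symm]
    congr 1
    refine sum_congr rfl fun p _ => sum_congr rfl fun q _ => ?_
    ring
  have hvalue : RCLike.re (∑ p, ∑ q, ⟪w p, w q⟫_𝕜 * ⟪u q, u p⟫_𝕜) = ∑ p, ‖w p‖ ^ 2 := by
    classical
    rw [map_sum]
    refine sum_congr rfl fun p _ => ?_
    rw [sum_eq_single p (fun q _ hqp => by rw [orthonormal_iff_ite.mp hu, if_neg hqp, mul_zero])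
      (by simp), orthonormal_iff_ite.mp hu, if_pos rfl, mul_one, inner_self_eq_norm_sq]
  convert RCLike.hasSum_re 𝕜 (hasSum_sum fun p _ => hasSum_sum fun q _ =>
    (b.hasSum_inner_mul_inner (u q) (u p)).mul_left ⟪w p, w q⟫_𝕜) using 1
  · exact funext hexpand
  · exact hvalue.symm

lemma hasSum_norm_sq_mul_starProjection_span {κ ι : Type*} [Fintype κ] {u : κ → E}
    [(span 𝕜 (Set.range u)).HasOrthogonalProjection] (hu : Orthonormal 𝕜 u) (S : E →L[𝕜] E)
    (b : HilbertBasis ι 𝕜 E) :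
    HasSum (fun i => ‖(S * (span 𝕜 (Set.range u)).starProjection) (b i)‖ ^ 2)
      (∑ p, ‖S (u p)‖ ^ 2) := by
  simpa [starProjection_span_range_apply hu] using hasSum_norm_sq_sum_inner_smul hu (S ∘ u) b

lemma norm_starProjection_orthogonal_le {K : Submodule 𝕜 E} [K.HasOrthogonalProjection] {v : E}
    (hv : v ∈ K) (w : E) : ‖Kᗮ.starProjection w‖ ≤ ‖w - v‖ := by
  calc ‖Kᗮ.starProjection w‖ = ‖Kᗮ.starProjection (w - v)‖ := by
        rw [map_sub, starProjection_orthogonal_apply_eq_zero hv, sub_zero]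
    _ ≤ ‖w - v‖ := Kᗮ.norm_starProjection_apply_le _

lemma finiteDimensional_range_mul (S : E →L[𝕜] E) {P : E →L[𝕜] E}
    [FiniteDimensional 𝕜 (LinearMap.range (P : E →ₗ[𝕜] E))] :
    FiniteDimensional 𝕜 (LinearMap.range ((S * P : E →L[𝕜] E) : E →ₗ[𝕜] E)) := by
  rw [ContinuousLinearMap.mul_def, ContinuousLinearMap.toLinearMap_comp, LinearMap.range_comp]
  infer_instance

lemma exists_orthonormal_of_orthogonalFamily {κ : Type*} [Fintype κ] {V : κ → Submodule 𝕜 E}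
    [∀ m, FiniteDimensional 𝕜 (V m)]
    (hV : OrthogonalFamily 𝕜 (fun m => V m) fun m => (V m).subtypeₗᵢ) :
    ∃ (n : ℕ) (u : Fin n → E), Orthonormal 𝕜 u ∧ n = ∑ m, Module.finrank 𝕜 (V m) ∧
      (∀ k, ∃ m, u k ∈ V m) ∧ ∀ m, V m ≤ span 𝕜 (Set.range u) := by
  let v : (Σ m, Fin (Module.finrank 𝕜 (V m))) → E := fun p => stdOrthonormalBasis 𝕜 (V p.1) p.2
  let e := Fintype.equivFin (Σ m, Fin (Module.finrank 𝕜 (V m)))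
  refine ⟨_, v ∘ e.symm, ?_, by simp,
    fun k => ⟨(e.symm k).1, (stdOrthonormalBasis 𝕜 (V (e.symm k).1) (e.symm k).2).2⟩, fun m => ?_⟩
  · exact (hV.orthonormal_sigma_orthonormal
      fun m => (stdOrthonormalBasis 𝕜 (V m)).orthonormal).comp _ e.symm.injective
  · intro x hx
    rw [show x = ((⟨x, hx⟩ : V m) : E) from rfl, ← (stdOrthonormalBasis 𝕜 (V m)).sum_repr ⟨x, hx⟩,
      Submodule.coe_sum]
    exact sum_mem fun k _ =>
      smul_mem _ _ (subset_span ⟨e ⟨m, k⟩, congrArg v (e.symm_apply_apply _)⟩)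

end Projection

section Operator

variable {H : Type*} [NormedAddCommGroup H] [InnerProductSpace ℂ H] [CompleteSpace H]
  {A : H →L[ℂ] H}

lemma abs_le_norm_of_mem_spectrum {x : ℝ} (hx : x ∈ spectrum ℝ A) : |x| ≤ ‖A‖ := by
  rcases subsingleton_or_nontrivial H with hH | hH
  · exact absurd hx (spectrum.notMem_iff.mpr (isUnit_of_subsingleton _))
  · simpa [Real.norm_eq_abs] using spectrum.norm_le_norm_of_mem hx

lemma inner_cfc_apply_left (g : ℝ → ℝ) (y z : H) :
    ⟪cfc g A y, z⟫_ℂ = ⟪y, cfc g A z⟫_ℂ :=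
  (cfc_predicate g A).isSymmetric y z

lemma norm_cfc_apply_sq {g : ℝ → ℝ} (hg : Continuous g) (y : H) :
    ‖cfc g A y‖ ^ 2 = RCLike.re ⟪cfc (fun x => g x ^ 2) A y, y⟫_ℂ := by
  simp only [sq, cfc_mul g g A, mul_apply_eq_comp, inner_cfc_apply_left g _ y]
  exact (inner_self_eq_norm_mul_norm (𝕜 := ℂ) _).symm

lemma re_inner_cfc_apply_le {g h : ℝ → ℝ} (hg : Continuous g) (hh : Continuous h)
    (hgh : ∀ x ∈ spectrum ℝ A, g x ≤ h x) (y : H) :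
    RCLike.re ⟪cfc g A y, y⟫_ℂ ≤ RCLike.re ⟪cfc h A y, y⟫_ℂ := by
  have := ((ContinuousLinearMap.le_def _ _).mp (cfc_mono hgh)).re_inner_nonneg_left y
  simpa [inner_sub_left] using this

lemma norm_cfc_apply_le_of_abs_le {g h : ℝ → ℝ} (hg : Continuous g) (hh : Continuous h)
    (hgh : ∀ x ∈ spectrum ℝ A, |g x| ≤ |h x|) (y : H) :
    ‖cfc g A y‖ ≤ ‖cfc h A y‖ := by
  refine (pow_le_pow_iff_left₀ (norm_nonneg _) (norm_nonneg _) two_ne_zero).mp ?_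
  rw [norm_cfc_apply_sq hg, norm_cfc_apply_sq hh]
  exact re_inner_cfc_apply_le (by fun_prop) (by fun_prop) (fun x hx => sq_le_sq.mpr (hgh x hx)) y

lemma inner_cfc_apply_cfc_apply_eq_zero {g h : ℝ → ℝ} (hg : Continuous g) (hh : Continuous h)
    (hgh : ∀ x ∈ spectrum ℝ A, g x * h x = 0) (y z : H) :
    ⟪cfc g A y, cfc h A z⟫_ℂ = 0 := by
  rw [inner_cfc_apply_left, ← mul_apply_eq_comp, ← cfc_mul g h A, cfc_congr hgh,
    cfc_const_zero, zero_apply, inner_zero_right]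

lemma norm_apply_cfc_sub_smul_le (hA : IsSelfAdjoint A) {φ : ℝ → ℝ} (hφ : Continuous φ)
    {c δ : ℝ} (hδ : 0 ≤ δ) (hsupp : ∀ x ∈ spectrum ℝ A, φ x ≠ 0 → |x - c| ≤ δ) (y : H) :
    ‖A (cfc φ A y) - (c : ℂ) • cfc φ A y‖ ≤ δ * ‖cfc φ A y‖ := by
  have hrepr : A (cfc φ A y) - (c : ℂ) • cfc φ A y = cfc (fun x => (x - c) * φ x) A y := by
    rw [cfc_mul (fun x => x - c) φ A, cfc_sub (fun x => x) (fun _ => c) A, cfc_id' ℝ A,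
      cfc_const c A, Algebra.algebraMap_eq_smul_one]
    simp [Complex.coe_smul]
  calc ‖A (cfc φ A y) - (c : ℂ) • cfc φ A y‖ = ‖cfc (fun x => (x - c) * φ x) A y‖ := by
        rw [hrepr]
    _ ≤ ‖cfc (fun x => δ * φ x) A y‖ := by
        refine norm_cfc_apply_le_of_abs_le (by fun_prop) (by fun_prop) (fun x hx => ?_) y
        by_cases h : φ x = 0
        · simp [h]
        · rw [abs_mul, abs_mul, abs_of_nonneg hδ]
          gcongr
          exact hsupp x hx h
    _ = δ * ‖cfc φ A y‖ := by
        rw [cfc_const_mul δ φ A, smul_apply, norm_smul, Real.norm_of_nonneg hδ]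

lemma sum_norm_cfc_apply_sq_le (hA : IsSelfAdjoint A) {κ : Type*} (S : Finset κ)
    {g : κ → ℝ → ℝ} (hg : ∀ k, Continuous (g k))
    (hsum : ∀ x ∈ spectrum ℝ A, ∑ k ∈ S, g k x ^ 2 ≤ 1) (y : H) :
    ∑ k ∈ S, ‖cfc (g k) A y‖ ^ 2 ≤ ‖y‖ ^ 2 := by
  have hcont : Continuous fun x => ∑ k ∈ S, g k x ^ 2 :=
    continuous_finsetSum _ fun k _ => (hg k).pow 2
  calc ∑ k ∈ S, ‖cfc (g k) A y‖ ^ 2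
      = RCLike.re ⟪cfc (fun x => ∑ k ∈ S, g k x ^ 2) A y, y⟫_ℂ := by
        simp_rw [norm_cfc_apply_sq (hg _), ← map_sum, ← sum_inner, ← _root_.sum_apply]
        rw [← cfc_sum (fun k x => g k x ^ 2) A S]
        congr
        ext x
        simp
    _ ≤ RCLike.re ⟪cfc (fun _ => (1 : ℝ)) A y, y⟫_ℂ :=
        re_inner_cfc_apply_le hcont continuous_const hsum y
    _ = ‖y‖ ^ 2 := by
        rw [cfc_const_one ℝ A, one_apply_eq_self]
        exact inner_self_eq_norm_sq y

lemma exists_orthonormal_of_cutoffs (hA : IsSelfAdjoint A) {N L : ℕ} {φ : Fin N → ℝ → ℝ}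
    (hφ : ∀ m, Continuous (φ m))
    (hdisj : Pairwise fun m m' => ∀ x ∈ spectrum ℝ A, φ m x * φ m' x = 0)
    {c : Fin N → ℝ} {δ : ℝ} (hδ : 0 ≤ δ)
    (hsupp : ∀ m, ∀ x ∈ spectrum ℝ A, φ m x ≠ 0 → |x - c m| ≤ δ)
    (f : Fin L → H) :
    ∃ (n : ℕ) (u : Fin n → H), Orthonormal ℂ u ∧ n ≤ N * L ∧
      (∀ l, ∑ m, cfc (φ m) A (f l) ∈ span ℂ (Set.range u)) ∧
      ∀ k, ∃ c' : ℝ, ‖A (u k) - (c' : ℂ) • u k‖ ≤ δ := by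
  have : FiniteDimensional ℂ (span ℂ (Set.range f)) :=
    FiniteDimensional.span_of_finite ℂ (Set.finite_range f)
  let V : Fin N → Submodule ℂ H := fun m =>
    (span ℂ (Set.range f)).map (cfc (φ m) A).toLinearMap
  have hV : OrthogonalFamily ℂ (fun m => V m) fun m => (V m).subtypeₗᵢ := by
    refine orthogonalFamily_iff_pairwise.mpr fun m m' hmm' => isOrtho_iff_inner_eq.mpr ?_
    rintro _ ⟨y, -, rfl⟩ _ ⟨z, -, rfl⟩
    exact inner_cfc_apply_cfc_apply_eq_zero (hφ m) (hφ m') (hdisj hmm') y z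
  obtain ⟨n, u, hu, rfl, hmem, hspan⟩ := exists_orthonormal_of_orthogonalFamily hV
  refine ⟨_, u, hu, ?_,
    fun l => sum_mem fun m _ => hspan m (mem_map_of_mem (subset_span ⟨l, rfl⟩)), fun k => ?_⟩
  · calc ∑ m, Module.finrank ℂ (V m) ≤ ∑ _m : Fin N, L := by
          refine sum_le_sum fun m _ => (finrank_map_le _ _).trans ?_
          exact (Fintype.card_fin L).le.trans' (finrank_range_le_card (R := ℂ) f)
      _ = N * L := by simp
  · obtain ⟨m, hm⟩ := hmem k
    obtain ⟨y, -, hy : cfc (φ m) A y = u k⟩ := mem_map.mp hm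
    refine ⟨c m, ?_⟩
    have := norm_apply_cfc_sub_smul_le hA (hφ m) hδ (hsupp m) y
    rwa [hy, hu.1 k, mul_one] at this

lemma exists_shift_norm_cfc_tent_lt (hA : IsSelfAdjoint A) {a τ : ℝ} (hτ : 0 < τ) {K : ℕ}
    (N : ℕ) {L : ℕ} (f : Fin L → H) {ε : ℝ} (hε : 0 < ε) (hK : ∑ l, ‖f l‖ ^ 2 < K * ε ^ 2) :
    ∃ s < K, ∀ l, ‖cfc (fun x => ∑ m ∈ range N, tent (τ / 2) (a + ((s + K * m : ℕ) : ℝ) * τ) x)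
      A (f l)‖ < ε := by
  set D : ℕ → ℝ → ℝ := fun s x => ∑ m ∈ range N, tent (τ / 2) (a + ((s + K * m : ℕ) : ℝ) * τ) x
  have hD : ∀ s, Continuous (D s) := fun s => by fun_prop
  have hsq : ∀ x, ∑ s ∈ range K, D s x ^ 2 ≤ 1 := by
    intro x
    have hD0 : ∀ s, 0 ≤ D s x := fun s => sum_nonneg fun _ _ => tent_nonneg (by positivity)
    refine (sum_le_sum fun s hs => ?_).trans (sum_sum_tent_le_one hτ a K N x)
    exact pow_le_of_le_one (hD0 s)
      ((single_le_sum (fun s _ => hD0 s) hs).trans (sum_sum_tent_le_one hτ a K N x)) two_ne_zero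
  have htotal : ∑ s ∈ range K, ∑ l, ‖cfc (D s) A (f l)‖ ^ 2 < ∑ _s ∈ range K, ε ^ 2 := by
    rw [sum_comm, sum_const, card_range, nsmul_eq_mul]
    exact (sum_le_sum fun l _ =>
      sum_norm_cfc_apply_sq_le hA _ hD (fun x _ => hsq x) (f l)).trans_lt hK
  obtain ⟨s, hs, hlt⟩ := exists_lt_of_sum_lt htotal
  exact ⟨s, mem_range.mp hs, fun l => lt_of_pow_lt_pow_left₀ 2 hε.le
    ((single_le_sum (f := fun l => ‖cfc (D s) A (f l)‖ ^ 2) (fun _ _ => sq_nonneg _)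
      (mem_univ l)).trans_lt hlt)⟩

lemma sub_sum_cfc_cellBump (hA : IsSelfAdjoint A) {η : ℝ} (hη : 0 < η) (c : ℕ → ℝ) {N : ℕ}
    (h0 : c 0 ≤ -‖A‖) (hN : ‖A‖ ≤ c N - η) (y : H) :
    y - ∑ m ∈ range N, cfc (cellBump η (c m) (c (m + 1))) A y =
      cfc (fun x => ∑ m ∈ range N, tent η (c m) x) A y := by
  have hcont : ∀ m, Continuous (cellBump η (c m) (c (m + 1))) := fun m => by fun_prop
  have hcfc : cfc (fun x => 1 - ∑ m ∈ range N, cellBump η (c m) (c (m + 1)) x) A =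
      1 - ∑ m ∈ range N, cfc (cellBump η (c m) (c (m + 1))) A := by
    rw [cfc_sub (fun _ => (1 : ℝ)) _ A continuousOn_const
      (continuous_finsetSum _ fun m _ => hcont m).continuousOn, cfc_const_one ℝ A,
      ← cfc_sum _ A _ fun m _ => (hcont m).continuousOn, Finset.sum_fn]
  rw [← cfc_congr (f := fun x => 1 - ∑ m ∈ range N, cellBump η (c m) (c (m + 1)) x)
    fun x hx => ?_, hcfc]
  · simp
  have hxA := abs_le_norm_of_mem_spectrum hx
  dsimp only
  rw [sum_range_cellBump, ramp_of_le_sub hη (by linarith [le_abs_self x]),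
    ramp_of_le hη.le (by linarith [neg_abs_le x])]
  ring

lemma exists_cutoffs_of_grid (hA : IsSelfAdjoint A) {L : ℕ} (f : Fin L → H) {ε : ℝ} (hε : 0 < ε)
    {K n : ℕ} {τ : ℝ} (hτ : 0 < τ) (hK : ∑ l, ‖f l‖ ^ 2 < K * ε ^ 2)
    (hn : 2 * ‖A‖ ≤ n * (K * τ)) :
    ∃ (φ : Fin (n + 2) → ℝ → ℝ) (c : Fin (n + 2) → ℝ), (∀ m, Continuous (φ m)) ∧
      Pairwise (fun m m' => ∀ x, φ m x * φ m' x = 0) ∧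
      (∀ m x, φ m x ≠ 0 → |x - c m| ≤ K * τ / 2) ∧
      ∀ l, ‖f l - ∑ m, cfc (φ m) A (f l)‖ < ε := by
  have hK1 : (1 : ℝ) ≤ K := by
    have : (0 : ℝ) < K := pos_of_mul_pos_left
      ((sum_nonneg fun l _ => sq_nonneg ‖f l‖).trans_lt hK) (by positivity)
    exact_mod_cast Nat.one_le_iff_ne_zero.mpr (by rintro rfl; simp at this)
  set w : ℝ := K * τ
  obtain ⟨s, hsK, hs⟩ := exists_shift_norm_cfc_tent_lt hA (a := -‖A‖ - w) hτ (n + 2) f hε hK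
  set c : ℕ → ℝ := fun m => -‖A‖ - w + ((s + K * m : ℕ) : ℝ) * τ
  have hc : ∀ m : ℕ, c m = -‖A‖ - w + s * τ + m * w := fun m => by
    simp only [c, w]; push_cast; ring
  have hsτ : s * τ ≤ w := by simp only [w]; gcongr
  have hτw : τ ≤ w := le_mul_of_one_le_left hτ.le hK1
  have hstep : ∀ m, c m + τ / 2 ≤ c (m + 1) := fun m => by rw [hc, hc]; push_cast; linarith
  have hmono : ∀ m m' : ℕ, m < m' → c (m + 1) ≤ c m' := fun m m' h => by
    have : (m : ℝ) + 1 ≤ m' := by exact_mod_cast h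
    rw [hc, hc]; push_cast; nlinarith
  refine ⟨fun m => cellBump (τ / 2) (c m) (c (m + 1)), fun m => (c m + c (m + 1)) / 2,
    fun m => by fun_prop, fun m m' hmm' x => ?_, fun m x hx => ?_, fun l => ?_⟩
  · rcases lt_or_gt_of_ne hmm' with h | h
    · exact cellBump_mul_cellBump_eq_zero (half_pos hτ) (hstep m) (hstep m') (hmono m m' h)
    · rw [mul_comm]
      exact cellBump_mul_cellBump_eq_zero (half_pos hτ) (hstep m') (hstep m) (hmono m' m h)
  · have := abs_sub_midpoint_le_of_cellBump_ne_zero (half_pos hτ) (hstep m) hx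
    rwa [hc (m + 1), hc m, show ∀ t : ℝ, t + (m + 1 : ℕ) * w - (t + m * w) = w from fun t => by
      push_cast; ring, ← hc m, ← hc (m + 1)] at this
  · rw [Fin.sum_univ_eq_sum_range (fun m => cfc (cellBump (τ / 2) (c m) (c (m + 1))) A (f l)),
      sub_sum_cfc_cellBump hA (half_pos hτ) c ?_ ?_ (f l)]
    · exact hs l
    · rw [hc]; push_cast; linarith
    · rw [hc]; push_cast; nlinarith [s.cast_nonneg (α := ℝ)]

lemma exists_cutoffs (hA : IsSelfAdjoint A) {L : ℕ} (f : Fin L → H) {ε : ℝ} (hε : 0 < ε) :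
    ∃ (N : ℕ) (φ : Fin N → ℝ → ℝ) (c : Fin N → ℝ) (δ : ℝ), 0 ≤ δ ∧ N * L * δ ^ 2 < ε ^ 2 ∧
      (∀ m, Continuous (φ m)) ∧ Pairwise (fun m m' => ∀ x, φ m x * φ m' x = 0) ∧
      (∀ m x, φ m x ≠ 0 → |x - c m| ≤ δ) ∧ ∀ l, ‖f l - ∑ m, cfc (φ m) A (f l)‖ < ε := by
  set R := ‖A‖ + 1
  obtain ⟨K, hK⟩ := exists_nat_gt ((∑ l, ‖f l‖ ^ 2) / ε ^ 2)
  rw [div_lt_iff₀ (by positivity)] at hK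
  have hK0 : (0 : ℝ) < K := pos_of_mul_pos_left
    ((sum_nonneg fun l _ => sq_nonneg ‖f l‖).trans_lt hK) (by positivity)
  obtain ⟨n, hn⟩ := exists_nat_gt (3 * L * R ^ 2 / ε ^ 2)
  rw [div_lt_iff₀ (by positivity)] at hn
  have hn0 : (0 : ℝ) < n :=
    pos_of_mul_pos_left ((by positivity : (0 : ℝ) ≤ 3 * L * R ^ 2).trans_lt hn) (by positivity)
  have hKτ : K * (2 * R / (n * K)) = R / n * 2 := by field_simp
  obtain ⟨φ, c, hφ, hdisj, hsupp, hfφ⟩ := exists_cutoffs_of_grid hA f hε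
    (τ := 2 * R / (n * K)) (by positivity) hK (by rw [hKτ]; field_simp; linarith)
  refine ⟨n + 2, φ, c, R / n, by positivity, ?_, hφ, hdisj, fun m x hx => ?_, hfφ⟩
  · calc ((n + 2 : ℕ) : ℝ) * L * (R / n) ^ 2 = (n + 2) / n * (L * R ^ 2 / n) := by
          push_cast; field_simp
      _ ≤ 3 * (L * R ^ 2 / n) := by
          have : (1 : ℝ) ≤ n := by
            exact_mod_cast Nat.one_le_iff_ne_zero.mpr (by rintro rfl; simp at hn0)
          gcongr
          rw [div_le_iff₀ hn0]
          linarith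
      _ < ε ^ 2 := by
          rw [← mul_div_assoc, div_lt_iff₀ hn0]
          linarith
  · simpa [hKτ] using hsupp m x hx

end Operator

end WeylVonNeumann

open WeylVonNeumann

theorem stmt_12_general {𝓗 : Type*} [NormedAddCommGroup 𝓗] [InnerProductSpace ℂ 𝓗] [CompleteSpace 𝓗]
    {ι : Type*} (bas : HilbertBasis ι ℂ 𝓗)
    (A : 𝓗 →L[ℂ] 𝓗) (hA : IsSelfAdjoint A)
    (L : ℕ) (f : Fin L → 𝓗) (ε : ℝ) (hε : 0 < ε) :
    ∃ P : 𝓗 →L[ℂ] 𝓗, IsIdempotentElem P ∧ IsSelfAdjoint P ∧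
      FiniteDimensional ℂ (LinearMap.range (P : 𝓗 →ₗ[ℂ] 𝓗)) ∧
      (∀ l, ‖((1 : 𝓗 →L[ℂ] 𝓗) - P) (f l)‖ < ε) ∧
      FiniteDimensional ℂ (LinearMap.range ((((1 : 𝓗 →L[ℂ] 𝓗) - P) * A * P : 𝓗 →L[ℂ] 𝓗) : 𝓗 →ₗ[ℂ] 𝓗)) ∧
      hsNorm bas (((1 : 𝓗 →L[ℂ] 𝓗) - P) * A * P) < ε := by
  obtain ⟨N, φ, c, δ, hδ, hNδ, hφ, hdisj, hsupp, hfφ⟩ := exists_cutoffs hA f hε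
  obtain ⟨n, u, hu, hn, hmem, heig⟩ := exists_orthonormal_of_cutoffs hA hφ
    (fun _ _ h x _ => hdisj h x) hδ (fun m x _ => hsupp m x) f
  set W := Submodule.span ℂ (Set.range u)
  have : FiniteDimensional ℂ W := FiniteDimensional.span_of_finite ℂ (Set.finite_range u)
  have hQ : (1 : 𝓗 →L[ℂ] 𝓗) - W.starProjection = Wᗮ.starProjection :=
    (W.starProjection_orthogonal').symm
  have hHS : ∑ k, ‖Wᗮ.starProjection (A (u k))‖ ^ 2 < ε ^ 2 := calc
    _ ≤ ∑ _k : Fin n, δ ^ 2 := Finset.sum_le_sum fun k _ => by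
        obtain ⟨c', hc'⟩ := heig k
        gcongr
        exact (norm_starProjection_orthogonal_le
          (W.smul_mem (c' : ℂ) (Submodule.subset_span ⟨k, rfl⟩)) _).trans hc'
    _ = n * δ ^ 2 := by simp
    _ ≤ N * L * δ ^ 2 := by gcongr; exact_mod_cast hn
    _ < ε ^ 2 := hNδ
  have hPfin : FiniteDimensional ℂ (LinearMap.range (W.starProjection : 𝓗 →ₗ[ℂ] 𝓗)) := by
    rw [W.range_starProjection]; infer_instance
  refine ⟨W.starProjection, W.isIdempotentElem_starProjection, isSelfAdjoint_starProjection W,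
    hPfin, fun l => ?_, finiteDimensional_range_mul _, ?_⟩
  · rw [hQ]
    exact (norm_starProjection_orthogonal_le (hmem l) (f l)).trans_lt (hfφ l)
  · rw [hsNorm, (hasSum_norm_sq_mul_starProjection_span hu _ bas).tsum_eq, hQ]
    exact (Real.sqrt_lt' hε).mpr hHS

/-- Weyl–von Neumann type approximation. For a self-adjoint operator `A`,
finitely many unit vectors `f₁,…,f_L` and `ε > 0`, there is a finite-rank orthogonal
projection `P` with `‖(I−P)f_l‖ < ε` for all `l`, and `(I−P)AP` of finite rank with
Hilbert–Schmidt norm `‖(I−P)AP‖₂ < ε`. -/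
theorem stmt_12 {𝓗 : Type*} [NormedAddCommGroup 𝓗] [InnerProductSpace ℂ 𝓗] [CompleteSpace 𝓗]
    {ι : Type*} (bas : HilbertBasis ι ℂ 𝓗)
    (A : 𝓗 →L[ℂ] 𝓗) (hA : IsSelfAdjoint A)
    (L : ℕ) (f : Fin L → 𝓗) (hf : ∀ l, ‖f l‖ = 1) (ε : ℝ) (hε : 0 < ε) :
    ∃ P : 𝓗 →L[ℂ] 𝓗, IsIdempotentElem P ∧ IsSelfAdjoint P ∧
      FiniteDimensional ℂ (LinearMap.range (P : 𝓗 →ₗ[ℂ] 𝓗)) ∧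
      (∀ l, ‖((1 : 𝓗 →L[ℂ] 𝓗) - P) (f l)‖ < ε) ∧
      FiniteDimensional ℂ (LinearMap.range ((((1 : 𝓗 →L[ℂ] 𝓗) - P) * A * P : 𝓗 →L[ℂ] 𝓗) : 𝓗 →ₗ[ℂ] 𝓗)) ∧
      hsNorm bas (((1 : 𝓗 →L[ℂ] 𝓗) - P) * A * P) < ε :=
  stmt_12_general bas A hA L f ε hε
end

section
/- Let A be self-adjoint and P a finite-rank projection with range in Dom(A) such that ‖(I−P)AP‖₂ ≤ δ, and suppose moreover AP is bounded with ‖AP‖ ≤ a and rank P ≤ N. Then for |t| ≤ T, the function α(t) = ‖(I−P)e^{itA}P‖₂ satisfies α(t) ≤ a√N ∫₀^t α(s) ds + Tδ√N, and consequently α(t) ≤ T δ √N e^{a√N T}. -/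
/-!
Write `U(t) = exp(itA)`, `Q = 1 - P`, and let `(e_k)_{k < r}` be an orthonormal basis of `ran P`.
The vector `F(t) = (U(-t) Q U(t) e_k)_k` of `ℓ²(Fin r; H)` has norm `α(t)` and vanishes at `0`;
by Duhamel its derivative is `(U(-t) [Q, iA] U(t) e_k)_k`. Since `[Q, A] = QAP - PAQ`, the first
term contributes at most `√r ‖QAP‖ ≤ √N δ` and the second at most `‖PA‖ α(t) ≤ a α(t)`.
Integrating `F'` gives the first bound and Grönwall's inequality the second.
-/

open NormedSpace InnerProductSpace

section EvalFamily

variable {𝓗 : Type*} [NormedAddCommGroup 𝓗] [InnerProductSpace ℂ 𝓗] {κ : Type*} [Fintype κ]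

noncomputable def evalFamily (e : κ → 𝓗) : (𝓗 →L[ℂ] 𝓗) →L[ℂ] PiLp 2 (fun _ : κ => 𝓗) :=
  (PiLp.continuousLinearEquiv 2 ℂ (fun _ : κ => 𝓗)).symm.toContinuousLinearMap.comp
    (ContinuousLinearMap.pi fun k => ContinuousLinearMap.apply ℂ 𝓗 (e k))

variable {e : κ → 𝓗}

theorem norm_evalFamily (S : 𝓗 →L[ℂ] 𝓗) :
    ‖evalFamily e S‖ = √(∑ k, ‖S (e k)‖ ^ 2) :=
  PiLp.norm_eq_of_L2 _

theorem norm_evalFamily_mul_le (T S : 𝓗 →L[ℂ] 𝓗) :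
    ‖evalFamily e (T * S)‖ ≤ ‖T‖ * ‖evalFamily e S‖ := by
  rw [norm_evalFamily, norm_evalFamily, ← Real.sqrt_sq (norm_nonneg T),
    ← Real.sqrt_mul (sq_nonneg _), Finset.mul_sum]
  gcongr with k
  rw [← mul_pow]
  exact pow_le_pow_left₀ (norm_nonneg _) (T.le_opNorm _) 2

theorem norm_evalFamily_mul_of_mem_unitary [CompleteSpace 𝓗] {U : 𝓗 →L[ℂ] 𝓗}
    (hU : U ∈ unitary (𝓗 →L[ℂ] 𝓗)) (S : 𝓗 →L[ℂ] 𝓗) :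
    ‖evalFamily e (U * S)‖ = ‖evalFamily e S‖ := by
  simp only [norm_evalFamily, mul_apply_eq_comp, U.norm_map_of_mem_unitary hU]

theorem norm_evalFamily_le (he : ∀ k, ‖e k‖ ≤ 1) (S : 𝓗 →L[ℂ] 𝓗) :
    ‖evalFamily e S‖ ≤ √(Fintype.card κ) * ‖S‖ := by
  rw [norm_evalFamily, ← Real.sqrt_sq (norm_nonneg S), ← Real.sqrt_mul (Nat.cast_nonneg _)]
  gcongr
  calc ∑ k, ‖S (e k)‖ ^ 2 ≤ ∑ _k : κ, ‖S‖ ^ 2 := by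
        gcongr with k
        simpa using S.le_opNorm_of_le (he k)
    _ = _ := by simp

theorem norm_le_sqrt_card_mul_norm {E : Type*} [SeminormedAddCommGroup E]
    (x : PiLp 2 (fun _ : κ => E)) : ‖x‖ ≤ √(Fintype.card κ) * ‖x‖ := by
  rcases isEmpty_or_nonempty κ with hκ | hκ
  · simp [PiLp.norm_eq_of_L2]
  · exact le_mul_of_one_le_left (norm_nonneg x)
      (Real.one_le_sqrt.mpr (by exact_mod_cast Fintype.card_pos))

theorem mul_sum_rankOne_apply (S : 𝓗 →L[ℂ] 𝓗) (x : 𝓗) :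
    (S * ∑ k, rankOne ℂ (e k) (e k)) x = ∑ k, ⟪e k, x⟫_ℂ • S (e k) := by
  simp [map_sum]

end EvalFamily

section HilbertSchmidt

variable {𝓗 : Type*} [NormedAddCommGroup 𝓗] [InnerProductSpace ℂ 𝓗]
  {ι κ : Type*} [Fintype κ] {e : κ → 𝓗}

theorem HilbertBasis.hasSum_norm_sq_sum_inner_smul [CompleteSpace 𝓗] (bas : HilbertBasis ι ℂ 𝓗)
    (he : Orthonormal ℂ e) (w : κ → 𝓗) :
    HasSum (fun i => ‖∑ k, ⟪e k, bas i⟫_ℂ • w k‖ ^ 2) (∑ k, ‖w k‖ ^ 2) := by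
  rw [← Complex.hasSum_ofReal]
  have expand : ∀ i, ((‖∑ k, ⟪e k, bas i⟫_ℂ • w k‖ ^ 2 : ℝ) : ℂ)
      = ∑ k, ∑ l, ⟪e k, bas i⟫_ℂ * ⟪bas i, e l⟫_ℂ * ⟪w l, w k⟫_ℂ := by
    intro i
    rw [Complex.ofReal_pow, ← RCLike.ofReal_eq_complex_ofReal, ← inner_self_eq_norm_sq_to_K]
    simp only [sum_inner, inner_sum, inner_smul_left, inner_smul_right, inner_conj_symm,
      Finset.mul_sum, mul_assoc]
  have diagonal : ((∑ k, ‖w k‖ ^ 2 : ℝ) : ℂ) = ∑ k, ∑ l, ⟪e k, e l⟫_ℂ * ⟪w l, w k⟫_ℂ := by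
    classical
    simp [orthonormal_iff_ite.mp he, inner_self_eq_norm_sq_to_K]
  simp_rw [expand, diagonal]
  exact hasSum_sum fun k _ => hasSum_sum fun l _ =>
    (bas.hasSum_inner_mul_inner (e k) (e l)).mul_right ⟪w l, w k⟫_ℂ

theorem hsNorm_mul_eq_norm_evalFamily [CompleteSpace 𝓗] (bas : HilbertBasis ι ℂ 𝓗)
    (he : Orthonormal ℂ e) {P : 𝓗 →L[ℂ] 𝓗} (hP : P = ∑ k, rankOne ℂ (e k) (e k))
    (S : 𝓗 →L[ℂ] 𝓗) : hsNorm bas (S * P) = ‖evalFamily e S‖ := by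
  simp_rw [hsNorm, hP, mul_sum_rankOne_apply, (bas.hasSum_norm_sq_sum_inner_smul he _).tsum_eq,
    norm_evalFamily]

theorem norm_mul_le_norm_evalFamily (he : Orthonormal ℂ e) {P : 𝓗 →L[ℂ] 𝓗}
    (hP : P = ∑ k, rankOne ℂ (e k) (e k)) (S : 𝓗 →L[ℂ] 𝓗) : ‖S * P‖ ≤ ‖evalFamily e S‖ := by
  subst hP
  refine ContinuousLinearMap.opNorm_le_bound _ (norm_nonneg _) fun x => ?_
  have bessel : √(∑ k, ‖⟪e k, x⟫_ℂ‖ ^ 2) ≤ ‖x‖ :=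
    Real.sqrt_le_iff.mpr ⟨norm_nonneg x, Orthonormal.sum_inner_products_le x he⟩
  rw [mul_sum_rankOne_apply, norm_evalFamily, mul_comm]
  calc ‖∑ k, ⟪e k, x⟫_ℂ • S (e k)‖ ≤ ∑ k, ‖⟪e k, x⟫_ℂ‖ * ‖S (e k)‖ :=
        norm_sum_le_of_le _ fun k _ => (norm_smul _ _).le
    _ ≤ √(∑ k, ‖⟪e k, x⟫_ℂ‖ ^ 2) * √(∑ k, ‖S (e k)‖ ^ 2) := Real.sum_mul_le_sqrt_mul_sqrt _ _ _
    _ ≤ ‖x‖ * √(∑ k, ‖S (e k)‖ ^ 2) := by gcongr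

end HilbertSchmidt

section Exponential

theorem hasDerivAt_exp_neg_smul_mul_mul_exp_smul {𝔸 : Type*} [NormedRing 𝔸] [NormedAlgebra ℝ 𝔸]
    [CompleteSpace 𝔸] (a b : 𝔸) (t : ℝ) :
    HasDerivAt (fun s : ℝ => exp (-(s • a)) * b * exp (s • a))
      (exp (-(t • a)) * (b * a - a * b) * exp (t • a)) t := by
  have hneg := hasDerivAt_exp_smul_const (-a) t
  simp only [smul_neg] at hneg
  exact ((hneg.mul_const b).mul (hasDerivAt_exp_smul_const' a t)).congr_deriv (by noncomm_ring)

theorem continuous_exp_neg_smul_mul_mul_exp_smul {𝔸 : Type*} [NormedRing 𝔸] [NormedAlgebra ℝ 𝔸]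
    [CompleteSpace 𝔸] (a b : 𝔸) :
    Continuous fun s : ℝ => exp (-(s • a)) * b * exp (s • a) :=
  continuous_iff_continuousAt.2 fun t =>
    (hasDerivAt_exp_neg_smul_mul_mul_exp_smul a b t).continuousAt

variable {𝔸 : Type*} [NormedRing 𝔸] [NormedAlgebra ℂ 𝔸] [StarRing 𝔸] [ContinuousStar 𝔸]
  [CompleteSpace 𝔸] [StarModule ℂ 𝔸]

theorem IsSelfAdjoint.exp_smul_I_smul_mem_unitary {A : 𝔸} (hA : IsSelfAdjoint A) (s : ℝ) :
    NormedSpace.exp (s • (Complex.I • A)) ∈ unitary 𝔸 := by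
  let +nondep : NormedAlgebra ℚ 𝔸 := .restrictScalars ℚ ℂ 𝔸
  have hskew : Complex.I • A ∈ skewAdjoint 𝔸 := hA.smul_mem_skewAdjoint Complex.conj_I
  exact exp_mem_unitary_of_mem_skewAdjoint (skewAdjoint.smul_mem s hskew)

end Exponential

section Gronwall

open intervalIntegral

theorem gronwallBound_zero_le {K ε : ℝ} (hK : 0 ≤ K) (hε : 0 ≤ ε) (t : ℝ) :
    gronwallBound 0 K ε t ≤ ε * t * Real.exp (K * t) := by
  rcases hK.eq_or_lt with rfl | hK
  · simp [gronwallBound_K0]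
  have hexp : Real.exp (K * t) - 1 ≤ K * t * Real.exp (K * t) := by
    have h := mul_le_mul_of_nonneg_right (Real.add_one_le_exp (-(K * t))) (Real.exp_pos (K * t)).le
    rw [← Real.exp_add, neg_add_cancel, Real.exp_zero] at h
    linarith
  simp only [gronwallBound_of_K_ne_0 hK.ne', zero_mul, zero_add]
  calc ε / K * (Real.exp (K * t) - 1) ≤ ε / K * (K * t * Real.exp (K * t)) := by gcongr
    _ = ε * t * Real.exp (K * t) := by field_simp

variable {E : Type*} [NormedAddCommGroup E] [NormedSpace ℝ E] [CompleteSpace E]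
  {F F' : ℝ → E} {K ε : ℝ}

theorem duhamel_gronwall_of_nonneg (hd : ∀ s, HasDerivAt F (F' s) s) (hc : Continuous F')
    (h0 : F 0 = 0) (hK : 0 ≤ K) (hε : 0 ≤ ε) (hb : ∀ s, ‖F' s‖ ≤ K * ‖F s‖ + ε)
    {t : ℝ} (ht : 0 ≤ t) :
    ‖F t‖ ≤ K * (∫ s in (0 : ℝ)..t, ‖F s‖) + ε * t ∧ ‖F t‖ ≤ ε * t * Real.exp (K * t) := by
  have hFc : Continuous F := continuous_iff_continuousAt.2 fun s => (hd s).continuousAt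
  constructor
  · rw [← sub_zero (F t), ← h0,
      ← integral_eq_sub_of_hasDerivAt (fun s _ => hd s) (hc.intervalIntegrable 0 t)]
    calc ‖∫ s in (0 : ℝ)..t, F' s‖ ≤ ∫ s in (0 : ℝ)..t, ‖F' s‖ :=
          norm_integral_le_integral_norm ht
      _ ≤ ∫ s in (0 : ℝ)..t, (K * ‖F s‖ + ε) :=
          integral_mono_on ht (hc.norm.intervalIntegrable 0 t)
            ((continuous_const.mul hFc.norm).add continuous_const |>.intervalIntegrable 0 t)
            fun s _ => hb s
      _ = K * (∫ s in (0 : ℝ)..t, ‖F s‖) + ε * t := by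
          rw [integral_add (f := fun s => K * ‖F s‖) (g := fun _ => ε)
            ((continuous_const.mul hFc.norm).intervalIntegrable 0 t) intervalIntegrable_const,
            integral_const_mul, integral_const]
          simp [mul_comm]
  · have h := norm_le_gronwallBound_of_norm_deriv_right_le hFc.continuousOn
      (fun s _ => (hd s).hasDerivWithinAt) (by rw [h0, norm_zero]) (fun s _ => hb s)
      t (Set.right_mem_Icc.2 ht)
    rw [sub_zero] at h
    exact h.trans (gronwallBound_zero_le hK hε t)

theorem duhamel_gronwall (hd : ∀ s, HasDerivAt F (F' s) s) (hc : Continuous F')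
    (h0 : F 0 = 0) (hK : 0 ≤ K) (hε : 0 ≤ ε) (hb : ∀ s, ‖F' s‖ ≤ K * ‖F s‖ + ε) (t : ℝ) :
    ‖F t‖ ≤ K * |∫ s in (0 : ℝ)..t, ‖F s‖| + ε * |t| ∧
      ‖F t‖ ≤ ε * |t| * Real.exp (K * |t|) := by
  rcases le_or_gt 0 t with ht | ht
  · rw [abs_of_nonneg ht, abs_of_nonneg (integral_nonneg ht fun s _ => norm_nonneg _)]
    exact duhamel_gronwall_of_nonneg hd hc h0 hK hε hb ht
  · have hd' : ∀ s, HasDerivAt (fun u => F (-u)) (-F' (-s)) s := fun s => by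
      simpa [Function.comp_def] using (hd (-s)).scomp s (hasDerivAt_neg s)
    have h := duhamel_gronwall_of_nonneg hd' (hc.comp continuous_neg).neg (by simpa using h0) hK hε
      (fun s => by simpa using hb (-s)) (neg_nonneg.2 ht.le)
    have hint : ∫ s in (0 : ℝ)..-t, ‖F (-s)‖ = |∫ s in (0 : ℝ)..t, ‖F s‖| := by
      rw [integral_comp_neg (fun s => ‖F s‖), neg_zero, neg_neg, integral_symm t 0, abs_neg,
        abs_of_nonneg (integral_nonneg ht.le fun s _ => norm_nonneg _)]
    rwa [hint, neg_neg, ← abs_of_neg ht] at h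

end Gronwall

section Propagation

variable {𝓗 : Type*} [NormedAddCommGroup 𝓗] [InnerProductSpace ℂ 𝓗] [CompleteSpace 𝓗]
  {κ : Type*} [Fintype κ] {e : κ → 𝓗}

theorem norm_evalFamily_conj_commutator_le (he : ∀ k, ‖e k‖ ≤ 1) {A P V W : 𝓗 →L[ℂ] 𝓗}
    (hV : V ∈ unitary (𝓗 →L[ℂ] 𝓗)) (hW : W ∈ unitary (𝓗 →L[ℂ] 𝓗)) :
    ‖evalFamily e (V * ((1 - P) * (Complex.I • A) - (Complex.I • A) * (1 - P)) * W)‖ ≤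
      √(Fintype.card κ) * ‖(1 - P) * A * P‖ + ‖P * A‖ * ‖evalFamily e ((1 - P) * W)‖ := by
  have hcomm : (1 - P) * (Complex.I • A) - (Complex.I • A) * (1 - P) =
      Complex.I • ((1 - P) * A * P - P * A * (1 - P)) := by
    simp only [mul_smul_comm, smul_mul_assoc, ← smul_sub]
    congr 1
    noncomm_ring
  calc _ = ‖evalFamily e ((1 - P) * A * P * W) - evalFamily e (P * A * ((1 - P) * W))‖ := by
        rw [hcomm, mul_assoc, norm_evalFamily_mul_of_mem_unitary hV, smul_mul_assoc, map_smul,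
          norm_smul, Complex.norm_I, one_mul, sub_mul, map_sub, mul_assoc (P * A)]
    _ ≤ ‖evalFamily e ((1 - P) * A * P * W)‖ + ‖evalFamily e (P * A * ((1 - P) * W))‖ :=
        norm_sub_le _ _
    _ ≤ _ := by
        gcongr
        · exact (norm_evalFamily_le he _).trans_eq (by rw [CStarRing.norm_mul_mem_unitary _ hW])
        · exact norm_evalFamily_mul_le _ _

theorem norm_evalFamily_one_sub_mul_exp_le (he : ∀ k, ‖e k‖ ≤ 1) {A P : 𝓗 →L[ℂ] 𝓗}
    (hA : IsSelfAdjoint A) (hP : evalFamily e (1 - P) = 0) {c d : ℝ} (hc : ‖P * A‖ ≤ c)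
    (hd : ‖(1 - P) * A * P‖ ≤ d) (t : ℝ) :
    ‖evalFamily e ((1 - P) * exp (t • (Complex.I • A)))‖ ≤
        c * √(Fintype.card κ) *
          |∫ s in (0 : ℝ)..t, ‖evalFamily e ((1 - P) * exp (s • (Complex.I • A)))‖| +
        √(Fintype.card κ) * d * |t| ∧
      ‖evalFamily e ((1 - P) * exp (t • (Complex.I • A)))‖ ≤
        √(Fintype.card κ) * d * |t| * Real.exp (c * √(Fintype.card κ) * |t|) := by
  have hc0 : 0 ≤ c := (norm_nonneg _).trans hc
  have hd0 : 0 ≤ d := (norm_nonneg _).trans hd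
  set B := Complex.I • A
  have hU : ∀ s : ℝ, exp (s • B) ∈ unitary (𝓗 →L[ℂ] 𝓗) := hA.exp_smul_I_smul_mem_unitary
  have hU' : ∀ s : ℝ, exp (-(s • B)) ∈ unitary (𝓗 →L[ℂ] 𝓗) := fun s => by
    rw [← neg_smul]; exact hU (-s)
  set F : ℝ → PiLp 2 (fun _ : κ => 𝓗) := fun s =>
    evalFamily e (exp (-(s • B)) * (1 - P) * exp (s • B))
  set F' : ℝ → PiLp 2 (fun _ : κ => 𝓗) := fun s =>
    evalFamily e (exp (-(s • B)) * ((1 - P) * B - B * (1 - P)) * exp (s • B))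
  have hFnorm : ∀ s, ‖F s‖ = ‖evalFamily e ((1 - P) * exp (s • B))‖ := fun s => by
    rw [← norm_evalFamily_mul_of_mem_unitary (hU' s) ((1 - P) * _), ← mul_assoc]
  have hF0 : F 0 = 0 := by simpa [F] using hP
  have hFd : ∀ s, HasDerivAt F (F' s) s := fun s =>
    ((evalFamily e).restrictScalars ℝ).hasFDerivAt.comp_hasDerivAt s
      (hasDerivAt_exp_neg_smul_mul_mul_exp_smul B (1 - P) s)
  have hF'c : Continuous F' :=
    (evalFamily e).continuous.comp (continuous_exp_neg_smul_mul_mul_exp_smul B _)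
  have hbound : ∀ s, ‖F' s‖ ≤ c * √(Fintype.card κ) * ‖F s‖ + √(Fintype.card κ) * d := by
    intro s
    calc ‖F' s‖ ≤ √(Fintype.card κ) * ‖(1 - P) * A * P‖ + ‖P * A‖ * ‖F s‖ := by
          rw [hFnorm]
          exact norm_evalFamily_conj_commutator_le he (hU' s) (hU s)
      _ ≤ √(Fintype.card κ) * d + c * (√(Fintype.card κ) * ‖F s‖) := by
          gcongr
          exact norm_le_sqrt_card_mul_norm _
      _ = c * √(Fintype.card κ) * ‖F s‖ + √(Fintype.card κ) * d := by ring
  simpa only [hFnorm] using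
    duhamel_gronwall hFd hF'c hF0 (by positivity) (by positivity) hbound t

end Propagation

/-- Duhamel + Grönwall estimate. Let `A` be self-adjoint and `P` a
finite-rank orthogonal projection with `‖(I−P)AP‖₂ ≤ δ`, `‖AP‖ ≤ a` and `rank P ≤ N`. Then
`α(t) = ‖(I−P)e^{itA}P‖₂` satisfies, for `|t| ≤ T`,
`α(t) ≤ a√N ∫₀ᵗ α(s) ds + Tδ√N`, and consequently `α(t) ≤ Tδ√N e^{a√N T}`. -/
theorem stmt_13 {𝓗 : Type*} [NormedAddCommGroup 𝓗] [InnerProductSpace ℂ 𝓗] [CompleteSpace 𝓗]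
    {ι : Type*} (bas : HilbertBasis ι ℂ 𝓗)
    (A P : 𝓗 →L[ℂ] 𝓗) (hA : IsSelfAdjoint A)
    (hP : IsIdempotentElem P) (hP' : IsSelfAdjoint P)
    (hPfin : FiniteDimensional ℂ (LinearMap.range (P : 𝓗 →ₗ[ℂ] 𝓗)))
    (a δ T : ℝ) (N : ℕ) (ha : ‖A * P‖ ≤ a)
    (hδ : hsNorm bas (((1 : 𝓗 →L[ℂ] 𝓗) - P) * A * P) ≤ δ)
    (hN : Module.finrank ℂ (LinearMap.range (P : 𝓗 →ₗ[ℂ] 𝓗)) ≤ N) (hT : 0 < T)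
    (α : ℝ → ℝ)
    (hα : ∀ t : ℝ, α t =
      hsNorm bas (((1 : 𝓗 →L[ℂ] 𝓗) - P) * NormedSpace.exp ((Complex.I * t) • A) * P))
    (t : ℝ) (ht : |t| ≤ T) :
    α t ≤ a * Real.sqrt N * |∫ s in (0:ℝ)..t, α s| + T * δ * Real.sqrt N ∧
      α t ≤ T * δ * Real.sqrt N * Real.exp (a * Real.sqrt N * T) := by
  have ha0 : 0 ≤ a := (norm_nonneg _).trans ha
  have hδ0 : 0 ≤ δ := (Real.sqrt_nonneg _).trans hδ
  obtain ⟨_, hPrange⟩ := isStarProjection_iff_eq_starProjection_range.mp ⟨hP, hP'⟩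
  set r := Module.finrank ℂ (LinearMap.range (P : 𝓗 →ₗ[ℂ] 𝓗))
  let b := stdOrthonormalBasis ℂ (LinearMap.range (P : 𝓗 →ₗ[ℂ] 𝓗))
  set e : Fin r → 𝓗 := fun k => b k
  have he : Orthonormal ℂ e := b.orthonormal.comp_linearIsometry (Submodule.subtypeₗᵢ _)
  have hPe : P = ∑ k, rankOne ℂ (e k) (e k) := hPrange.trans b.starProjection_eq_sum_rankOne
  have hαe : ∀ s : ℝ, α s = ‖evalFamily e ((1 - P) * exp (s • (Complex.I • A)))‖ := fun s => by
    rw [hα, ← smul_smul, smul_comm, Complex.coe_smul, hsNorm_mul_eq_norm_evalFamily bas he hPe]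
  have hQ : evalFamily e (1 - P) = 0 := by
    rw [← norm_eq_zero, ← hsNorm_mul_eq_norm_evalFamily bas he hPe, hP.one_sub_mul_self]
    simp [hsNorm]
  have hQAP : ‖(1 - P) * A * P‖ ≤ δ :=
    (norm_mul_le_norm_evalFamily he hPe _).trans
      ((hsNorm_mul_eq_norm_evalFamily bas he hPe _).symm.trans_le hδ)
  have hPA : ‖P * A‖ ≤ a := by
    rwa [← norm_star, star_mul, hA.star_eq, hP'.star_eq]
  have hr : √(Fintype.card (Fin r)) ≤ √N := by
    simpa using Real.sqrt_le_sqrt (by exact_mod_cast hN : (r : ℝ) ≤ N)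
  obtain ⟨hint, hexp⟩ :=
    norm_evalFamily_one_sub_mul_exp_le (fun k => (he.1 k).le) hA hQ hPA hQAP t
  simp only [← hαe] at hint hexp
  rw [show T * δ * √N = √N * δ * T by ring]
  exact ⟨hint.trans (by gcongr), hexp.trans (by gcongr)⟩
end

section
/- Let H, H₀ be bounded operators, P a finite-rank projection, and r ≥ 1. Then ‖(H^r − (PHP)^r)P‖₂ ≤ r(1+‖H‖)^r ‖(I−P)HP‖₂. -/
/-!
With `B = PHP` and `D = (1 - P)HP`, idempotency of `P` gives `P Bⁿ P = Bⁿ P`, hence the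
telescoping step `(Hⁿ⁺¹ - Bⁿ⁺¹)P = H (Hⁿ - Bⁿ)P + D Bⁿ P`. The Hilbert–Schmidt norm satisfies the
triangle inequality and is an operator ideal norm (`‖AT‖₂ ≤ ‖A‖ ‖T‖₂`, `‖TA‖₂ ≤ ‖T‖₂ ‖A‖`, the
latter via adjoints), and `‖Bⁿ P‖ ≤ ‖H‖ⁿ` since `‖P‖ ≤ 1`; induction on `n` gives the bound.
Working with the `ℝ≥0∞`-valued norm removes all summability side conditions; the finite rank of
`P` makes `‖D‖₂` finite, which is what allows passing back to the real-valued norm.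
-/

open scoped ENNReal

namespace ENNReal

theorem Lp_add_le_tsum {ι : Type*} (f g : ι → ℝ≥0∞) {p : ℝ} (hp : 1 ≤ p) :
    (∑' i, (f i + g i) ^ p) ^ (1 / p) ≤
      (∑' i, f i ^ p) ^ (1 / p) + (∑' i, g i ^ p) ^ (1 / p) := by
  have hp₀ : 0 < p := zero_lt_one.trans_le hp
  rw [one_div, ENNReal.rpow_inv_le_iff hp₀, ENNReal.tsum_eq_iSup_sum]
  refine iSup_le fun s => (ENNReal.rpow_inv_le_iff hp₀).mp ?_
  rw [← one_div]
  refine (ENNReal.Lp_add_le s f g hp).trans (add_le_add ?_ ?_) <;>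
    exact ENNReal.rpow_le_rpow (ENNReal.sum_le_tsum s) (by positivity)

end ENNReal

section Parseval

variable {𝕜 E ι : Type*} [RCLike 𝕜] [NormedAddCommGroup E] [InnerProductSpace 𝕜 E]

theorem HilbertBasis.tsum_enorm_inner_sq (b : HilbertBasis ι 𝕜 E) (x : E) :
    ∑' i, ‖inner 𝕜 (b i) x‖ₑ ^ 2 = ‖x‖ₑ ^ 2 := by
  have h : HasSum (fun i => ‖inner 𝕜 (b i) x‖ ^ 2) (‖x‖ ^ 2) := by
    have h := (b.hasSum_inner_mul_inner x x).mapL (RCLike.reCLM (K := 𝕜))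
    simpa only [Function.comp_def, RCLike.reCLM_apply, inner_mul_symm_re_eq_norm, norm_mul,
      norm_inner_symm x, ← sq, inner_self_eq_norm_sq] using h
  simp only [← ofReal_norm, ← ENNReal.ofReal_pow (norm_nonneg _)]
  rw [← ENNReal.ofReal_tsum_of_nonneg (fun _ => by positivity) h.summable, h.tsum_eq]

theorem OrthonormalBasis.sum_enorm_inner_sq [Fintype ι] (b : OrthonormalBasis ι 𝕜 E) (x : E) :
    ∑ i, ‖inner 𝕜 (b i) x‖ₑ ^ 2 = ‖x‖ₑ ^ 2 := by
  simp only [← ofReal_norm, ← ENNReal.ofReal_pow (norm_nonneg _)]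
  rw [← ENNReal.ofReal_sum_of_nonneg (fun _ _ => by positivity), b.sum_sq_norm_inner_right]

end Parseval

section HilbertSchmidt

variable {𝕜 E ι : Type*} [RCLike 𝕜] [NormedAddCommGroup E] [InnerProductSpace 𝕜 E]
  (b : HilbertBasis ι 𝕜 E)

theorem enorm_inner_symm (x y : E) : ‖inner 𝕜 x y‖ₑ = ‖inner 𝕜 y x‖ₑ := by
  simp only [← ofReal_norm, norm_inner_symm]

noncomputable def hsENorm (T : E →L[𝕜] E) : ℝ≥0∞ :=
  (∑' i, ‖T (b i)‖ₑ ^ 2) ^ (1 / 2 : ℝ)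

theorem hsENorm_add_le (S T : E →L[𝕜] E) : hsENorm b (S + T) ≤ hsENorm b S + hsENorm b T := by
  have h := ENNReal.Lp_add_le_tsum (fun i => ‖S (b i)‖ₑ) (fun i => ‖T (b i)‖ₑ) one_le_two
  simp only [ENNReal.rpow_two] at h
  refine le_trans ?_ h
  unfold hsENorm
  gcongr with i
  exact enorm_add_le _ _

theorem hsENorm_mul_le_left (A T : E →L[𝕜] E) : hsENorm b (A * T) ≤ ‖A‖ₑ * hsENorm b T := by
  calc hsENorm b (A * T) ≤ (∑' i, (‖A‖ₑ * ‖T (b i)‖ₑ) ^ 2) ^ (1 / 2 : ℝ) := by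
        unfold hsENorm
        gcongr with i
        exact A.le_opENorm _
    _ = ‖A‖ₑ * hsENorm b T := by
        simp only [hsENorm, mul_pow, ENNReal.tsum_mul_left]
        rw [ENNReal.mul_rpow_of_nonneg _ _ (by norm_num), ← ENNReal.rpow_two, ← ENNReal.rpow_mul]
        norm_num

variable [CompleteSpace E]

theorem hsENorm_star (T : E →L[𝕜] E) : hsENorm b (star T) = hsENorm b T := by
  suffices ∑' i, ‖star T (b i)‖ₑ ^ 2 = ∑' i, ‖T (b i)‖ₑ ^ 2 by rw [hsENorm, hsENorm, this]
  calc ∑' i, ‖star T (b i)‖ₑ ^ 2 = ∑' i, ∑' j, ‖inner 𝕜 (b j) (star T (b i))‖ₑ ^ 2 := by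
        simp only [b.tsum_enorm_inner_sq]
    _ = ∑' j, ∑' i, ‖inner 𝕜 (b i) (T (b j))‖ₑ ^ 2 := by
        rw [ENNReal.tsum_comm]
        simp only [ContinuousLinearMap.star_eq_adjoint, ContinuousLinearMap.adjoint_inner_right,
          enorm_inner_symm]
    _ = ∑' i, ‖T (b i)‖ₑ ^ 2 := by simp only [b.tsum_enorm_inner_sq]

theorem hsENorm_mul_le_right (T A : E →L[𝕜] E) : hsENorm b (T * A) ≤ hsENorm b T * ‖A‖ₑ := by
  rw [← hsENorm_star, star_mul, ← hsENorm_star b T, mul_comm,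
    ← ContinuousLinearMap.adjoint.enorm_map A, ← ContinuousLinearMap.star_eq_adjoint]
  exact hsENorm_mul_le_left b _ _

theorem tsum_enorm_apply_sq_eq_sum_enorm_adjoint_sq (T : E →L[𝕜] E)
    [FiniteDimensional 𝕜 (LinearMap.range (T : E →ₗ[𝕜] E))] :
    ∑' i, ‖T (b i)‖ₑ ^ 2 =
      ∑ k, ‖ContinuousLinearMap.adjoint T (stdOrthonormalBasis 𝕜 (LinearMap.range
        (T : E →ₗ[𝕜] E)) k)‖ₑ ^ 2 := by
  set w := stdOrthonormalBasis 𝕜 (LinearMap.range (T : E →ₗ[𝕜] E))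
  have hrange (x : E) :
      ‖T x‖ₑ ^ 2 = ∑ k, ‖inner 𝕜 (ContinuousLinearMap.adjoint T (w k)) x‖ₑ ^ 2 := by
    simp only [ContinuousLinearMap.adjoint_inner_left]
    exact (w.sum_enorm_inner_sq ⟨T x, LinearMap.mem_range_self _ x⟩).symm
  calc ∑' i, ‖T (b i)‖ₑ ^ 2
      = ∑ k, ∑' i, ‖inner 𝕜 (ContinuousLinearMap.adjoint T (w k)) (b i)‖ₑ ^ 2 := by
        simp only [hrange]
        exact Summable.tsum_finsetSum fun _ _ => ENNReal.summable
    _ = _ := by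
        simp only [enorm_inner_symm, b.tsum_enorm_inner_sq]

theorem hsENorm_ne_top_of_finiteDimensional_range (T : E →L[𝕜] E)
    [FiniteDimensional 𝕜 (LinearMap.range (T : E →ₗ[𝕜] E))] : hsENorm b T ≠ ⊤ := by
  rw [hsENorm, tsum_enorm_apply_sq_eq_sum_enorm_adjoint_sq]
  exact ENNReal.rpow_ne_top_of_nonneg (by norm_num) (ENNReal.sum_ne_top.2 fun _ _ => by finiteness)

end HilbertSchmidt

theorem hsNorm_eq_toReal_hsENorm {E ι : Type*} [NormedAddCommGroup E] [InnerProductSpace ℂ E]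
    [CompleteSpace E] (b : HilbertBasis ι ℂ E) (T : E →L[ℂ] E) :
    hsNorm b T = (hsENorm b T).toReal := by
  -- no summability needed: off `ℓ²` the real `tsum` is `0` and `(⊤ : ℝ≥0∞).toReal = 0`
  rw [hsNorm, hsENorm, ← ENNReal.toReal_rpow, ENNReal.tsum_toReal_eq (fun _ => by finiteness),
    Real.sqrt_eq_rpow, one_div]
  simp

section Compression

variable {R : Type*}

theorem IsIdempotentElem.mul_compression_pow_mul [Monoid R] {P : R} (hP : IsIdempotentElem P)
    (H : R) (n : ℕ) : P * ((P * H * P) ^ n * P) = (P * H * P) ^ n * P := by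
  cases n with
  | zero => simpa using hP.eq
  | succ n => rw [pow_succ', mul_assoc, ← mul_assoc P, ← mul_assoc P, ← mul_assoc P, hP.eq]

theorem IsIdempotentElem.pow_succ_sub_compression_pow_succ_mul [Ring R] {P : R}
    (hP : IsIdempotentElem P) (H : R) (n : ℕ) :
    (H ^ (n + 1) - (P * H * P) ^ (n + 1)) * P =
      H * ((H ^ n - (P * H * P) ^ n) * P) + (1 - P) * H * P * ((P * H * P) ^ n * P) := by
  have hX := hP.mul_compression_pow_mul H n
  rw [pow_succ', pow_succ']
  simp only [sub_mul, mul_sub, one_mul, mul_assoc] at hX ⊢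
  rw [hX]
  abel

theorem norm_compression_pow_mul_le [SeminormedRing R] {P : R} (hP : ‖P‖ ≤ 1) (H : R) (n : ℕ) :
    ‖(P * H * P) ^ n * P‖ ≤ ‖H‖ ^ n := by
  induction n with
  | zero => simpa using hP
  | succ n ih =>
    have hB : ‖P * H * P‖ ≤ ‖H‖ := calc
      ‖P * H * P‖ ≤ ‖P‖ * ‖H‖ * ‖P‖ := norm_mul₃_le
      _ ≤ 1 * ‖H‖ * 1 := by gcongr
      _ = ‖H‖ := by ring
    calc ‖(P * H * P) ^ (n + 1) * P‖ ≤ ‖P * H * P‖ * ‖(P * H * P) ^ n * P‖ := by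
          rw [pow_succ', mul_assoc]; exact norm_mul_le _ _
      _ ≤ ‖H‖ * ‖H‖ ^ n := by gcongr
      _ = ‖H‖ ^ (n + 1) := (pow_succ' _ _).symm

end Compression

theorem hsENorm_pow_sub_compression_pow_mul_le {𝕜 E ι : Type*} [RCLike 𝕜] [NormedAddCommGroup E]
    [InnerProductSpace 𝕜 E] [CompleteSpace E] (b : HilbertBasis ι 𝕜 E) {P : E →L[𝕜] E}
    (hP : IsIdempotentElem P) (hP₁ : ‖P‖ ≤ 1) (H : E →L[𝕜] E) (n : ℕ) :
    hsENorm b ((H ^ n - (P * H * P) ^ n) * P) ≤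
      n * (1 + ‖H‖ₑ) ^ n * hsENorm b ((1 - P) * H * P) := by
  set c := 1 + ‖H‖ₑ
  set D := (1 - P) * H * P
  induction n with
  | zero => simp [hsENorm]
  | succ n ih =>
    have hHc : ‖H‖ₑ ≤ c := le_add_self
    have hcompr : ‖(P * H * P) ^ n * P‖ₑ ≤ c ^ (n + 1) := by
      have h := ENNReal.ofReal_le_ofReal (norm_compression_pow_mul_le hP₁ H n)
      rw [ofReal_norm, ENNReal.ofReal_pow (norm_nonneg _), ofReal_norm] at h
      exact h.trans <|
        (pow_le_pow_left₀ zero_le hHc n).trans (pow_le_pow_right₀ le_self_add n.le_succ)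
    calc hsENorm b ((H ^ (n + 1) - (P * H * P) ^ (n + 1)) * P)
        ≤ hsENorm b (H * ((H ^ n - (P * H * P) ^ n) * P)) +
            hsENorm b (D * ((P * H * P) ^ n * P)) := by
          rw [hP.pow_succ_sub_compression_pow_succ_mul]
          exact hsENorm_add_le b _ _
      _ ≤ ‖H‖ₑ * (n * c ^ n * hsENorm b D) + hsENorm b D * c ^ (n + 1) := by
          gcongr
          · exact (hsENorm_mul_le_left b _ _).trans (by gcongr)
          · exact (hsENorm_mul_le_right b _ _).trans (by gcongr)
      _ ≤ c * (n * c ^ n * hsENorm b D) + hsENorm b D * c ^ (n + 1) := by gcongr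
      _ = (n + 1 : ℕ) * c ^ (n + 1) * hsENorm b D := by push_cast; ring

theorem stmt_16_general {𝓗 : Type*} [NormedAddCommGroup 𝓗] [InnerProductSpace ℂ 𝓗] [CompleteSpace 𝓗]
    {ι : Type*} (bas : HilbertBasis ι ℂ 𝓗)
    (H P : 𝓗 →L[ℂ] 𝓗)
    (hP : IsIdempotentElem P) (hP' : IsSelfAdjoint P)
    (hPfin : FiniteDimensional ℂ (LinearMap.range (P : 𝓗 →ₗ[ℂ] 𝓗)))
    (r : ℕ) :
    hsNorm bas ((H ^ r - (P * H * P) ^ r) * P) ≤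
      r * (1 + ‖H‖) ^ r * hsNorm bas (((1 : 𝓗 →L[ℂ] 𝓗) - P) * H * P) := by
  have hP₁ : ‖P‖ ≤ 1 := IsStarProjection.norm_le P ⟨hP, hP'⟩
  have hPHS : hsENorm bas P ≠ ⊤ := hsENorm_ne_top_of_finiteDimensional_range bas P
  have hDHS : hsENorm bas ((1 - P) * H * P) ≠ ⊤ :=
    ne_top_of_le_ne_top (by finiteness) (hsENorm_mul_le_left bas ((1 - P) * H) P)
  rw [hsNorm_eq_toReal_hsENorm, hsNorm_eq_toReal_hsENorm]
  calc (hsENorm bas ((H ^ r - (P * H * P) ^ r) * P)).toReal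
      ≤ (r * (1 + ‖H‖ₑ) ^ r * hsENorm bas ((1 - P) * H * P)).toReal :=
        ENNReal.toReal_mono (by finiteness) (hsENorm_pow_sub_compression_pow_mul_le bas hP hP₁ H r)
    _ = r * (1 + ‖H‖) ^ r * (hsENorm bas ((1 - P) * H * P)).toReal := by
        simp [ENNReal.toReal_mul, ENNReal.toReal_pow, ENNReal.toReal_add]

/-- For a bounded operator `H`, a finite-rank orthogonal projection `P` and
`r ≥ 1`: `‖(H^r − (PHP)^r)P‖₂ ≤ r (1+‖H‖)^r ‖(I−P)HP‖₂`. -/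
theorem stmt_16 {𝓗 : Type*} [NormedAddCommGroup 𝓗] [InnerProductSpace ℂ 𝓗] [CompleteSpace 𝓗]
    {ι : Type*} (bas : HilbertBasis ι ℂ 𝓗)
    (H P : 𝓗 →L[ℂ] 𝓗)
    (hP : IsIdempotentElem P) (hP' : IsSelfAdjoint P)
    (hPfin : FiniteDimensional ℂ (LinearMap.range (P : 𝓗 →ₗ[ℂ] 𝓗)))
    (r : ℕ) (hr : 1 ≤ r) :
    hsNorm bas ((H ^ r - (P * H * P) ^ r) * P) ≤
      r * (1 + ‖H‖) ^ r * hsNorm bas (((1 : 𝓗 →L[ℂ] 𝓗) - P) * H * P) :=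
  stmt_16_general bas H P hP hP' hPfin r
end

section
/- Let H₀ be self-adjoint on a finite-dimensional space (or bounded self-adjoint) and g Lipschitz with Lipschitz constant K on an interval containing the spectra of H₀ and H₀ + sV. Then ‖g(H₀ + sV) − g(H₀)‖₂ ≤ s·K·‖V‖₂. -/
/-!
Finite-dimensional Birman–Solomyak argument. Diagonalise `H₁ = H₀ + sV = U₁ Λ U₁*` and
`H₀ = U₀ M U₀*` and put `B = U₁* U₀`. Then `U₁* (g(H₁) - g(H₀)) U₀` has entries
`(g(λᵢ) - g(μⱼ)) Bᵢⱼ`, while `U₁* (H₁ - H₀) U₀` has entries `(λᵢ - μⱼ) Bᵢⱼ`: both are the same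
Schur multiplier applied to `B`. The Lipschitz bound compares them entrywise, and the
Hilbert–Schmidt norm is both monotone in the moduli of the entries and unitarily invariant.
-/

attribute [local instance] Matrix.frobeniusNormedAddCommGroup

/-- Functional calculus for a Hermitian matrix, via the spectral theorem: `g(A)`. -/
noncomputable def hermApply {n : ℕ} {A : Matrix (Fin n) (Fin n) ℂ} (hA : A.IsHermitian)
    (g : ℝ → ℂ) : Matrix (Fin n) (Fin n) ℂ :=
  (Matrix.IsHermitian.eigenvectorUnitary hA : Matrix (Fin n) (Fin n) ℂ) *
    Matrix.diagonal (g ∘ hA.eigenvalues) *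
    star (Matrix.IsHermitian.eigenvectorUnitary hA : Matrix (Fin n) (Fin n) ℂ)

attribute [local instance] Matrix.frobeniusNormSMulClass

theorem Unitary.star_mul_conj_sub_conj_mul {R : Type*} [Ring R] [StarMul R] {U₁ U₀ : R}
    (hU₁ : U₁ ∈ unitary R) (hU₀ : U₀ ∈ unitary R) (D₁ D₀ : R) :
    star U₁ * (U₁ * D₁ * star U₁ - U₀ * D₀ * star U₀) * U₀ =
      D₁ * (star U₁ * U₀) - star U₁ * U₀ * D₀ := by
  simp only [mul_sub, sub_mul, ← mul_assoc, Unitary.star_mul_self_of_mem hU₁, one_mul]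
  simp only [mul_assoc, Unitary.star_mul_self_of_mem hU₀, mul_one]

namespace Matrix

section Frobenius

variable {α 𝕜 m n : Type*} [Fintype m] [Fintype n]

theorem frobenius_norm_sq_eq_sum [NormedAddCommGroup α] (A : Matrix m n α) :
    ‖A‖ ^ 2 = ∑ i, ∑ j, ‖A i j‖ ^ 2 := by
  rw [frobenius_norm_def, ← Real.rpow_natCast _ 2, ← Real.rpow_mul (by positivity)]
  norm_num

theorem frobenius_norm_le_mul_of_forall_norm_le [NormedAddCommGroup α]
    {A B : Matrix m n α} {c : ℝ} (hc : 0 ≤ c) (h : ∀ i j, ‖A i j‖ ≤ c * ‖B i j‖) :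
    ‖A‖ ≤ c * ‖B‖ := by
  refine (pow_le_pow_iff_left₀ (norm_nonneg _) (by positivity) two_ne_zero).mp ?_
  rw [frobenius_norm_sq_eq_sum, mul_pow, frobenius_norm_sq_eq_sum, Finset.mul_sum]
  gcongr with i _
  rw [Finset.mul_sum]
  gcongr with j _
  rw [← mul_pow]
  exact pow_le_pow_left₀ (norm_nonneg _) (h i j) 2

variable [RCLike 𝕜]

theorem frobenius_norm_sq_eq_re_trace (A : Matrix m n 𝕜) :
    ‖A‖ ^ 2 = RCLike.re (Aᴴ * A).trace := by
  rw [frobenius_norm_sq_eq_sum, Finset.sum_comm]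
  simp only [trace, diag, mul_apply, conjTranspose_apply, map_sum, RCLike.star_def,
    RCLike.conj_mul, ← RCLike.ofReal_pow, RCLike.ofReal_re]

theorem frobenius_norm_unitary_mul [DecidableEq m] {U : Matrix m m 𝕜}
    (hU : U ∈ unitary (Matrix m m 𝕜)) (A : Matrix m n 𝕜) : ‖U * A‖ = ‖A‖ := by
  refine (pow_left_inj₀ (norm_nonneg _) (norm_nonneg _) two_ne_zero).mp ?_
  rw [frobenius_norm_sq_eq_re_trace, frobenius_norm_sq_eq_re_trace, conjTranspose_mul,
    Matrix.mul_assoc, ← Matrix.mul_assoc Uᴴ, ← star_eq_conjTranspose,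
    Unitary.star_mul_self_of_mem hU, Matrix.one_mul]

theorem frobenius_norm_mul_unitary [DecidableEq n] {U : Matrix n n 𝕜}
    (hU : U ∈ unitary (Matrix n n 𝕜)) (A : Matrix m n 𝕜) : ‖A * U‖ = ‖A‖ := by
  rw [← frobenius_norm_conjTranspose, conjTranspose_mul, ← star_eq_conjTranspose U,
    frobenius_norm_unitary_mul (Unitary.star_mem hU), frobenius_norm_conjTranspose]

theorem frobenius_norm_conj_sub_conj [DecidableEq m] {U₁ U₀ : Matrix m m 𝕜}
    (hU₁ : U₁ ∈ unitary (Matrix m m 𝕜)) (hU₀ : U₀ ∈ unitary (Matrix m m 𝕜))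
    (D₁ D₀ : Matrix m m 𝕜) :
    ‖U₁ * D₁ * star U₁ - U₀ * D₀ * star U₀‖ = ‖D₁ * (star U₁ * U₀) - star U₁ * U₀ * D₀‖ := by
  rw [← Unitary.star_mul_conj_sub_conj_mul hU₁ hU₀, frobenius_norm_mul_unitary hU₀,
    frobenius_norm_unitary_mul (Unitary.star_mem hU₁)]

end Frobenius

theorem diagonal_mul_sub_mul_diagonal_apply {α m n : Type*} [Fintype m] [Fintype n]
    [DecidableEq m] [DecidableEq n] [CommRing α] (d : m → α) (e : n → α) (B : Matrix m n α)
    (i : m) (j : n) : (diagonal d * B - B * diagonal e) i j = (d i - e j) * B i j := by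
  rw [sub_apply, diagonal_mul, mul_diagonal, sub_mul, mul_comm (e j)]

theorem norm_diagonal_mul_sub_mul_diagonal_le {𝕜 m n : Type*} [Fintype m] [Fintype n]
    [DecidableEq m] [DecidableEq n] [NormedField 𝕜] {f d : m → 𝕜} {f' d' : n → 𝕜} {c : ℝ}
    (hc : 0 ≤ c) (h : ∀ i j, ‖f i - f' j‖ ≤ c * ‖d i - d' j‖) (B : Matrix m n 𝕜) :
    ‖diagonal f * B - B * diagonal f'‖ ≤ c * ‖diagonal d * B - B * diagonal d'‖ := by
  refine frobenius_norm_le_mul_of_forall_norm_le hc fun i j => ?_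
  simp only [diagonal_mul_sub_mul_diagonal_apply, norm_mul, ← mul_assoc]
  exact mul_le_mul_of_nonneg_right (h i j) (norm_nonneg _)

end Matrix

open Matrix

section hermApply

variable {n : ℕ} {A A₁ A₀ : Matrix (Fin n) (Fin n) ℂ}

theorem hermApply_ofReal (hA : A.IsHermitian) : hermApply hA (↑) = A := by
  conv_rhs => rw [hA.spectral_theorem, Unitary.conjStarAlgAut_apply]
  rfl

theorem norm_hermApply_sub_le (h₁ : A₁.IsHermitian) (h₀ : A₀.IsHermitian) {S : Set ℝ}
    {K : NNReal} {g : ℝ → ℂ} (hg : LipschitzOnWith K g S) (hspec₁ : ∀ i, h₁.eigenvalues i ∈ S)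
    (hspec₀ : ∀ i, h₀.eigenvalues i ∈ S) :
    ‖hermApply h₁ g - hermApply h₀ g‖ ≤ K * ‖A₁ - A₀‖ := by
  have hentry (i j : Fin n) : ‖g (h₁.eigenvalues i) - g (h₀.eigenvalues j)‖ ≤
      K * ‖(h₁.eigenvalues i : ℂ) - h₀.eigenvalues j‖ := by
    rw [← Complex.ofReal_sub, Complex.norm_real, ← dist_eq_norm, ← dist_eq_norm]
    exact hg.dist_le_mul _ (hspec₁ i) _ (hspec₀ j)
  have hU₁ := h₁.eigenvectorUnitary.2
  have hU₀ := h₀.eigenvectorUnitary.2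
  conv_rhs => rw [← hermApply_ofReal h₁, ← hermApply_ofReal h₀]
  simp only [hermApply]
  rw [frobenius_norm_conj_sub_conj hU₁ hU₀, frobenius_norm_conj_sub_conj hU₁ hU₀]
  exact norm_diagonal_mul_sub_mul_diagonal_le K.2 hentry _

end hermApply

theorem stmt_18_general {n : ℕ} (H₀ V : Matrix (Fin n) (Fin n) ℂ)
    (hH₀ : H₀.IsHermitian)
    (s : ℝ) (hs0 : 0 ≤ s) (hs : (H₀ + (s : ℂ) • V).IsHermitian)
    (K : NNReal) (g : ℝ → ℂ) (a b : ℝ)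
    (hg : LipschitzOnWith K g (Set.Icc a b))
    (hspec₀ : ∀ i, hH₀.eigenvalues i ∈ Set.Icc a b)
    (hspecs : ∀ i, hs.eigenvalues i ∈ Set.Icc a b) :
    ‖hermApply hs g - hermApply hH₀ g‖ ≤ s * K * ‖V‖ := by
  calc ‖hermApply hs g - hermApply hH₀ g‖ ≤ K * ‖H₀ + (s : ℂ) • V - H₀‖ :=
        norm_hermApply_sub_le hs hH₀ hg hspecs hspec₀
    _ = s * K * ‖V‖ := by
        rw [add_sub_cancel_left, norm_smul, Complex.norm_real, Real.norm_of_nonneg hs0]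
        ring

/-- Hilbert–Schmidt operator-Lipschitz estimate. If `g` is Lipschitz with
constant `K` on an interval containing the spectra of the Hermitian matrices `H₀` and
`H₀ + sV` (`s ≥ 0`), then `‖g(H₀ + sV) − g(H₀)‖₂ ≤ s K ‖V‖₂` in the Frobenius
(Hilbert–Schmidt) norm. -/
theorem stmt_18 {n : ℕ} (H₀ V : Matrix (Fin n) (Fin n) ℂ)
    (hH₀ : H₀.IsHermitian) (hV : V.IsHermitian)
    (s : ℝ) (hs0 : 0 ≤ s) (hs : (H₀ + (s : ℂ) • V).IsHermitian)
    (K : NNReal) (g : ℝ → ℂ) (a b : ℝ)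
    (hg : LipschitzOnWith K g (Set.Icc a b))
    (hspec₀ : ∀ i, hH₀.eigenvalues i ∈ Set.Icc a b)
    (hspecs : ∀ i, hs.eigenvalues i ∈ Set.Icc a b) :
    ‖hermApply hs g - hermApply hH₀ g‖ ≤ s * K * ‖V‖ :=
  stmt_18_general H₀ V hH₀ s hs0 hs K g a b hg hspec₀ hspecs
end
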